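/- arXiv:2108.12306 — 5 statements merged into one kernel-verified Lean document; each statement's English description precedes it below -/
import Mathlib

section
/- For 0 < r < 1, 0 < θ ≤ 1, and 0 < s < 1, and any σ > 0, one has (1/(σ√(2π))) ∫_{-∞}^{∞} φ(t) exp(−t²/(2σ²)) dt ≤ min{1, c · r^{θ(1−s)+s}/σ}, where φ(t) = 1 for |t| < r, φ(t) = (r/|t|)^s for r ≤ |t| < r^θ, φ(t) = 0 for |t| ≥ r^θ, and c = (2/√(2π)) · (1 + 1/(1−s)). -/
open Real MeasureTheory Set

theorem gaussian_kernel_expectation (r θ s σ : ℝ) (hr0 : 0 < r) (hr1 : r < 1)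
    (hθ0 : 0 < θ) (hθ1 : θ ≤ 1) (hs0 : 0 < s) (hs1 : s < 1) (hσ : 0 < σ) :
    (1 / (σ * Real.sqrt (2 * π))) *
      ∫ t : ℝ, (if |t| < r then (1 : ℝ)
          else if |t| < r ^ θ then (r / |t|) ^ s else 0) *
        Real.exp (-t ^ 2 / (2 * σ ^ 2)) ≤
    min 1 ((2 / Real.sqrt (2 * π)) * (1 + 1 / (1 - s)) * r ^ (θ * (1 - s) + s) / σ) := by
  have h1s : 0 < 1 - s := by linarith
  have hrθ : r ≤ r ^ θ := by
    calc r = r ^ (1:ℝ) := (Real.rpow_one r).symm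
    _ ≤ r ^ θ := Real.rpow_le_rpow_of_exponent_ge hr0 hr1.le hθ1
  have hrθ1 : r ^ θ ≤ 1 := Real.rpow_le_one hr0.le hr1.le hθ0.le
  set f : ℝ → ℝ := fun u => if u < r then (1:ℝ) else if u < r ^ θ then (r / u) ^ s else 0
    with hf_def
  set φ : ℝ → ℝ := fun t => f |t| with hφ_def
  rw [show (∫ t : ℝ, (if |t| < r then (1:ℝ)
      else if |t| < r ^ θ then (r / |t|) ^ s else 0) * Real.exp (-t ^ 2 / (2 * σ ^ 2)))
      = ∫ t : ℝ, φ t * Real.exp (-t ^ 2 / (2 * σ ^ 2)) from rfl]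
  have hf_nonneg : ∀ u, 0 ≤ f u := by
    intro u
    simp only [hf_def]
    split_ifs with h1 h2
    · norm_num
    · push_neg at h1
      have hu : 0 < u := lt_of_lt_of_le hr0 h1
      positivity
    · exact le_refl _
  have hf_le_one : ∀ u, f u ≤ 1 := by
    intro u
    simp only [hf_def]
    split_ifs with h1 h2
    · exact le_refl _
    · push_neg at h1
      have hu : 0 < u := lt_of_lt_of_le hr0 h1
      apply Real.rpow_le_one (by positivity) _ hs0.le
      rw [div_le_one hu]
      exact h1
    · norm_num
  have hφ_nonneg : ∀ t, 0 ≤ φ t := fun t => hf_nonneg _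
  have hφ_le_one : ∀ t, φ t ≤ 1 := fun t => hf_le_one _
  have hf_meas : Measurable f := by
    apply Measurable.ite (measurableSet_lt measurable_id measurable_const) measurable_const
    apply Measurable.ite (measurableSet_lt measurable_id measurable_const) _ measurable_const
    fun_prop
  have hφ_meas : Measurable φ := hf_meas.comp measurable_abs
  have hb : (0:ℝ) < 1 / (2 * σ ^ 2) := by positivity
  have hg_int : Integrable (fun t : ℝ => Real.exp (-(1 / (2 * σ ^ 2)) * t ^ 2)) :=
    integrable_exp_neg_mul_sq hb
  have hexp_eq : ∀ t : ℝ, Real.exp (-t ^ 2 / (2 * σ ^ 2))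
      = Real.exp (-(1 / (2 * σ ^ 2)) * t ^ 2) := by
    intro t; congr 1; field_simp
  have hF_int : Integrable (fun t : ℝ => φ t * Real.exp (-t ^ 2 / (2 * σ ^ 2))) := by
    apply hg_int.mono' ((hφ_meas.mul (by fun_prop)).aestronglyMeasurable)
    filter_upwards with t
    show ‖φ t * Real.exp (-t ^ 2 / (2 * σ ^ 2))‖ ≤ Real.exp (-(1 / (2 * σ ^ 2)) * t ^ 2)
    rw [Real.norm_eq_abs, abs_of_nonneg (mul_nonneg (hφ_nonneg t) (Real.exp_nonneg _)), hexp_eq t]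
    exact mul_le_of_le_one_left (Real.exp_nonneg _) (hφ_le_one t)
  have hind_int : Integrable ((Icc (-1:ℝ) 1).indicator (fun _ => (1:ℝ))) := by
    rw [integrable_indicator_iff measurableSet_Icc]
    exact integrableOn_const (by rw [Real.volume_Icc]; exact ENNReal.ofReal_ne_top)
  have hφ_int : Integrable φ := by
    apply hind_int.mono' hφ_meas.aestronglyMeasurable
    filter_upwards with t
    rw [Real.norm_eq_abs, abs_of_nonneg (hφ_nonneg t)]
    by_cases ht : t ∈ Icc (-1:ℝ) 1
    · rw [indicator_of_mem ht]; exact hφ_le_one t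
    · rw [indicator_of_notMem ht]
      simp only [mem_Icc, not_and_or, not_le] at ht
      have h1t : 1 < |t| := by
        rcases ht with h | h
        · exact lt_abs.2 (Or.inr (by linarith))
        · exact lt_abs.2 (Or.inl h)
      have hA : ¬ |t| < r := by push_neg; linarith
      have hB : ¬ |t| < r ^ θ := by push_neg; linarith
      simp only [hφ_def, hf_def]
      rw [if_neg hA, if_neg hB]
  have hgauss : ∫ t : ℝ, Real.exp (-(1 / (2 * σ ^ 2)) * t ^ 2) = σ * Real.sqrt (2 * π) := by
    rw [integral_gaussian]
    rw [show π / (1 / (2 * σ ^ 2)) = (2 * π) * σ ^ 2 by field_simp]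
    rw [Real.sqrt_mul (by positivity), Real.sqrt_sq hσ.le]
    ring
  have hsqrt_pos : (0:ℝ) < Real.sqrt (2 * π) := Real.sqrt_pos.2 (by positivity)
  have hbound1 : ∫ t : ℝ, φ t * Real.exp (-t ^ 2 / (2 * σ ^ 2)) ≤ σ * Real.sqrt (2 * π) := by
    rw [← hgauss]
    apply integral_mono hF_int hg_int
    intro t
    show φ t * Real.exp (-t ^ 2 / (2 * σ ^ 2)) ≤ Real.exp (-(1 / (2 * σ ^ 2)) * t ^ 2)
    rw [hexp_eq t]
    exact mul_le_of_le_one_left (Real.exp_nonneg _) (hφ_le_one t)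
  set E := r ^ (θ * (1 - s) + s) with hE_def
  have hE_pos : 0 < E := Real.rpow_pos_of_pos hr0 _
  have hrE : r ≤ E := by
    calc r = r ^ (1:ℝ) := (Real.rpow_one r).symm
    _ ≤ E := Real.rpow_le_rpow_of_exponent_ge hr0 hr1.le (by nlinarith)
  set G : ℝ → ℝ := fun u => (Ioc (0:ℝ) r).indicator (fun _ => (1:ℝ)) u
      + (Ioc r (r ^ θ)).indicator (fun u => r ^ s * u ^ (-s)) u with hG_def
  have hG1_int : Integrable ((Ioc (0:ℝ) r).indicator (fun _ => (1:ℝ))) := by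
    rw [integrable_indicator_iff measurableSet_Ioc]
    exact integrableOn_const (by rw [Real.volume_Ioc]; exact ENNReal.ofReal_ne_top)
  have hG2_int : Integrable ((Ioc r (r ^ θ)).indicator (fun u => r ^ s * u ^ (-s))) := by
    rw [integrable_indicator_iff measurableSet_Ioc]
    apply (ContinuousOn.integrableOn_Icc _).mono_set Ioc_subset_Icc_self
    apply ContinuousOn.mul continuousOn_const
    apply ContinuousOn.rpow_const continuousOn_id
    intro x hx
    exact Or.inl (ne_of_gt (lt_of_lt_of_le hr0 hx.1))
  have hG_int : Integrable G := hG1_int.add hG2_int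
  have hfG : ∀ u ∈ Ioi (0:ℝ), f u ≤ G u := by
    intro u hu
    have hu0 : (0:ℝ) < u := hu
    have hG2nn : (0:ℝ) ≤ (Ioc r (r ^ θ)).indicator (fun u => r ^ s * u ^ (-s)) u := by
      apply indicator_nonneg; intro x hx
      have hx0 : 0 < x := lt_trans hr0 hx.1
      positivity
    have hG1nn : (0:ℝ) ≤ (Ioc (0:ℝ) r).indicator (fun _ => (1:ℝ)) u := by
      apply indicator_nonneg; intro x _; norm_num
    by_cases h1 : u ≤ r
    · have h : (Ioc (0:ℝ) r).indicator (fun _ => (1:ℝ)) u = 1 :=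
        indicator_of_mem (Set.mem_Ioc.2 ⟨hu0, h1⟩) _
      simp only [hG_def]
      rw [h]
      have := hf_le_one u
      linarith
    · push_neg at h1
      by_cases h2 : u ≤ r ^ θ
      · have hG2 : (Ioc r (r ^ θ)).indicator (fun u => r ^ s * u ^ (-s)) u
            = r ^ s * u ^ (-s) := indicator_of_mem (mem_Ioc.2 ⟨h1, h2⟩) _
        simp only [hG_def]
        rw [hG2]
        have hfu : f u ≤ r ^ s * u ^ (-s) := by
          have hev : (r / u) ^ s = r ^ s * u ^ (-s) := by
            rw [Real.div_rpow hr0.le hu0.le, Real.rpow_neg hu0.le, div_eq_mul_inv]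
          simp only [hf_def]
          rw [if_neg (by push_neg; linarith)]
          split_ifs with h3
          · rw [hev]
          · positivity
        linarith
      · push_neg at h2
        have hfu : f u = 0 := by
          simp only [hf_def]
          rw [if_neg (by push_neg; linarith), if_neg (by push_neg; linarith)]
        rw [hfu]
        simp only [hG_def]
        linarith
  have hf_int_Ioi : IntegrableOn f (Ioi (0:ℝ)) := by
    have h : IntegrableOn φ (Ioi (0:ℝ)) := hφ_int.integrableOn
    apply h.congr_fun _ measurableSet_Ioi
    intro u hu
    simp only [hφ_def, abs_of_pos (mem_Ioi.1 hu)]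
  have hIoi : ∫ u in Ioi (0:ℝ), f u ≤ r + r ^ s * ((r ^ θ) ^ (1-s) - r ^ (1-s)) / (1-s) := by
    have hmono : ∫ u in Ioi (0:ℝ), f u ≤ ∫ u in Ioi (0:ℝ), G u :=
      setIntegral_mono_on hf_int_Ioi hG_int.integrableOn measurableSet_Ioi hfG
    have hGval : ∫ u in Ioi (0:ℝ), G u
        = r + r ^ s * ((r ^ θ) ^ (1-s) - r ^ (1-s)) / (1-s) := by
      simp only [hG_def]
      rw [integral_add (hG1_int.integrableOn) (hG2_int.integrableOn)]
      have e1 : ∫ u in Ioi (0:ℝ), (Ioc (0:ℝ) r).indicator (fun _ => (1:ℝ)) u = r := by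
        rw [setIntegral_indicator measurableSet_Ioc,
          inter_eq_right.2 (fun x hx => mem_Ioi.2 (mem_Ioc.1 hx).1)]
        simp [Real.volume_Ioc, ENNReal.toReal_ofReal hr0.le, hr0.le]
      have e2 : ∫ u in Ioi (0:ℝ), (Ioc r (r ^ θ)).indicator (fun u => r ^ s * u ^ (-s)) u
          = r ^ s * ((r ^ θ) ^ (1-s) - r ^ (1-s)) / (1-s) := by
        rw [setIntegral_indicator measurableSet_Ioc,
          inter_eq_right.2 (fun x hx => mem_Ioi.2 (lt_trans hr0 (mem_Ioc.1 hx).1))]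
        rw [← intervalIntegral.integral_of_le hrθ]
        rw [intervalIntegral.integral_const_mul]
        rw [integral_rpow (Or.inl (by linarith))]
        rw [show -s + 1 = 1 - s by ring]
        ring
      rw [e1, e2]
    linarith
  have hEeq : r ^ s * (r ^ θ) ^ (1-s) = E := by
    rw [← Real.rpow_mul hr0.le, ← Real.rpow_add hr0]
    rw [hE_def]
    ring_nf
  have hnum : r ^ s * ((r ^ θ) ^ (1-s) - r ^ (1-s)) ≤ E := by
    have h0 : 0 ≤ r ^ s * r ^ (1-s) := by positivity
    nlinarith [hEeq]
  have hφ_integral : ∫ t : ℝ, φ t ≤ 2 * (1 + 1 / (1-s)) * E := by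
    have habs : ∫ t : ℝ, φ t = 2 * ∫ u in Ioi (0:ℝ), f u := by
      simp only [hφ_def]
      exact integral_comp_abs (f := f)
    rw [habs]
    have h2 : r ^ s * ((r ^ θ) ^ (1-s) - r ^ (1-s)) / (1-s) ≤ E / (1-s) := by gcongr
    have h3 : (2:ℝ) * ∫ u in Ioi (0:ℝ), f u ≤ 2 * (E + E / (1-s)) := by linarith
    calc (2:ℝ) * ∫ u in Ioi (0:ℝ), f u ≤ 2 * (E + E / (1-s)) := h3
    _ = 2 * (1 + 1 / (1-s)) * E := by field_simp
  -- Bound 2 final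
  have hbound2 : ∫ t : ℝ, φ t * Real.exp (-t ^ 2 / (2 * σ ^ 2)) ≤ 2 * (1 + 1 / (1-s)) * E := by
    refine le_trans (integral_mono hF_int hφ_int fun t => ?_) hφ_integral
    have hexp1 : Real.exp (-t ^ 2 / (2 * σ ^ 2)) ≤ 1 := by
      apply Real.exp_le_one_iff.2
      have h0 : (0:ℝ) ≤ t ^ 2 / (2 * σ ^ 2) := by positivity
      have : -t ^ 2 / (2 * σ ^ 2) = -(t ^ 2 / (2 * σ ^ 2)) := by ring
      linarith [this ▸ neg_nonpos_of_nonneg h0]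
    calc φ t * Real.exp (-t ^ 2 / (2 * σ ^ 2)) ≤ φ t * 1 :=
      mul_le_mul_of_nonneg_left hexp1 (hφ_nonneg t)
    _ = φ t := mul_one _
  apply le_min
  · calc (1 / (σ * Real.sqrt (2 * π))) * ∫ t : ℝ, φ t * Real.exp (-t ^ 2 / (2 * σ ^ 2))
        ≤ (1 / (σ * Real.sqrt (2 * π))) * (σ * Real.sqrt (2 * π)) :=
      mul_le_mul_of_nonneg_left hbound1 (by positivity)
    _ = 1 := by field_simp
  · calc (1 / (σ * Real.sqrt (2 * π))) * ∫ t : ℝ, φ t * Real.exp (-t ^ 2 / (2 * σ ^ 2))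
        ≤ (1 / (σ * Real.sqrt (2 * π))) * (2 * (1 + 1 / (1-s)) * E) :=
      mul_le_mul_of_nonneg_left hbound2 (by positivity)
    _ = (2 / Real.sqrt (2 * π)) * (1 + 1 / (1-s)) * E / σ := by
      field_simp
end

section
/- Fix p > 0, h ∈ (0,1), θ ∈ (0,1], s ∈ (0,1]. There is a constant c > 0 (depending only on p, h) such that for every integer M ≥ 1 and every 0 < r < 1, the discrete energy E = M^{−2} Σ_{i,j=M}^{2M−1} ψ(x_i − x_j), where x_k = 1/k^p and ψ(x) = min{1, r^{θ(1−s)+s}/|x|^h} (with ψ(0)=1), satisfies E ≤ M^{−1} + c · M^{ph} · r^{θ(1−s)+s}. -/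
open Real Finset

/-- Mean value theorem for rpow. -/
lemma mvt_rpow {q a b : ℝ} (hq : 0 ≤ q) (ha : 0 ≤ a) (hab : a < b) :
    ∃ ξ ∈ Set.Ioo a b, b ^ q - a ^ q = q * ξ ^ (q - 1) * (b - a) := by
  obtain ⟨c, hc, hc'⟩ := exists_hasDerivAt_eq_slope (fun x => x ^ q)
      (fun x => q * x ^ (q - 1)) hab
      (fun x hx => (Real.continuousAt_rpow_const x q (Or.inr hq)).continuousWithinAt)
      (fun x hx => Real.hasDerivAt_rpow_const (Or.inl (ne_of_gt (lt_of_le_of_lt ha hx.1))))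
  refine ⟨c, hc, ?_⟩
  rw [eq_div_iff (sub_ne_zero.2 hab.ne')] at hc'
  linarith [hc']

lemma harmonic_rpow_sum {h : ℝ} (hh0 : 0 < h) (hh1 : h < 1) (N : ℕ) :
    ∑ d ∈ Finset.range N, ((d : ℝ) + 1) ^ (-h) ≤ (N : ℝ) ^ (1 - h) / (1 - h) := by
  have h1 : (0:ℝ) < 1 - h := by linarith
  induction N with
  | zero => simp [Real.zero_rpow h1.ne']
  | succ N ih =>
    rw [Finset.sum_range_succ]
    obtain ⟨ξ, hξ, heq⟩ := mvt_rpow h1.le (Nat.cast_nonneg N)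
        (show (N:ℝ) < (N:ℝ) + 1 by linarith)
    have he1 : (1:ℝ) - h - 1 = -h := by ring
    have he2 : ((N:ℝ) + 1) - (N:ℝ) = 1 := by ring
    rw [he1, he2, mul_one] at heq
    have hξpos : 0 < ξ := lt_of_le_of_lt (Nat.cast_nonneg N) hξ.1
    have hmono : ((N:ℝ) + 1) ^ (-h) ≤ ξ ^ (-h) :=
      Real.rpow_le_rpow_of_nonpos hξpos hξ.2.le (by linarith)
    have key : ((N:ℝ) + 1) ^ (-h) ≤ (((N:ℝ) + 1) ^ (1 - h) - (N:ℝ) ^ (1 - h)) / (1 - h) := by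
      have hd : (1 - h) * ξ ^ (-h) / (1 - h) = ξ ^ (-h) := by field_simp
      rw [heq, hd]
      exact hmono
    calc ∑ d ∈ Finset.range N, ((d : ℝ) + 1) ^ (-h) + ((N:ℝ) + 1) ^ (-h)
        ≤ (N : ℝ) ^ (1 - h) / (1 - h)
          + (((N:ℝ) + 1) ^ (1 - h) - (N:ℝ) ^ (1 - h)) / (1 - h) := add_le_add ih key
      _ = ((N:ℝ) + 1) ^ (1 - h) / (1 - h) := by ring
      _ = ((N + 1 : ℕ) : ℝ) ^ (1 - h) / (1 - h) := by push_cast; ring_nf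

lemma image_sum_le {h : ℝ} (hh0 : 0 < h) (hh1 : h < 1) (M : ℕ) (s : Finset ℕ) (e : ℕ → ℕ)
    (hinj : ∀ x ∈ s, ∀ y ∈ s, e x = e y → x = y) (hmaps : ∀ x ∈ s, e x ∈ Finset.range M)
    (f : ℕ → ℝ) (hf : ∀ x ∈ s, f x = ((e x : ℝ) + 1) ^ (-h)) :
    ∑ j ∈ s, f j ≤ (M:ℝ) ^ (1 - h) / (1 - h) := by
  calc ∑ j ∈ s, f j = ∑ j ∈ s, ((e j : ℝ) + 1) ^ (-h) := Finset.sum_congr rfl hf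
    _ = ∑ d ∈ s.image e, ((d : ℝ) + 1) ^ (-h) := by rw [Finset.sum_image hinj]
    _ ≤ ∑ d ∈ Finset.range M, ((d : ℝ) + 1) ^ (-h) :=
        Finset.sum_le_sum_of_subset_of_nonneg (Finset.image_subset_iff.mpr hmaps)
          (fun d _ _ => Real.rpow_nonneg (by positivity) _)
    _ ≤ _ := harmonic_rpow_sum hh0 hh1 M

lemma slice_sum {h : ℝ} (hh0 : 0 < h) (hh1 : h < 1) (M i : ℕ) (hM : 1 ≤ M)
    (hi : i ∈ Finset.Icc M (2 * M - 1)) :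
    ∑ j ∈ Finset.Icc M (2 * M - 1), |(i:ℝ) - (j:ℝ)| ^ (-h)
      ≤ 2 * ((M:ℝ) ^ (1 - h) / (1 - h)) := by
  simp only [Finset.mem_Icc] at hi
  set A := Finset.Icc M (2 * M - 1) with hA
  have hsplit := Finset.sum_filter_add_sum_filter_not A (fun j => j < i)
    (fun j => |(i:ℝ) - (j:ℝ)| ^ (-h))
  rw [← hsplit]
  have b1 : ∑ j ∈ A.filter (fun j => j < i), |(i:ℝ) - (j:ℝ)| ^ (-h)
      ≤ (M:ℝ) ^ (1 - h) / (1 - h) := by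
    apply image_sum_le hh0 hh1 M _ (fun j => i - j - 1)
    · intro x hx y hy hxy
      simp only [hA, Finset.mem_filter, Finset.mem_Icc] at hx hy
      omega
    · intro x hx
      simp only [hA, Finset.mem_filter, Finset.mem_Icc] at hx
      simp only [Finset.mem_range]
      omega
    · intro x hx
      simp only [hA, Finset.mem_filter, Finset.mem_Icc] at hx
      have hxi : x < i := hx.2
      have h1 : ((i - x - 1 : ℕ) : ℝ) + 1 = (i:ℝ) - (x:ℝ) := by
        have h2 : (i - x - 1) + 1 + x = i := by omega
        have h3 := congrArg (Nat.cast : ℕ → ℝ) h2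
        push_cast at h3
        linarith
      rw [h1, abs_of_nonneg (sub_nonneg.mpr (by exact_mod_cast hxi.le))]
  have hzero : |(i:ℝ) - (i:ℝ)| ^ (-h) = 0 := by
    rw [sub_self, abs_zero, Real.zero_rpow (neg_ne_zero.mpr hh0.ne')]
  have b2 : ∑ j ∈ A.filter (fun j => ¬ j < i), |(i:ℝ) - (j:ℝ)| ^ (-h)
      ≤ (M:ℝ) ^ (1 - h) / (1 - h) := by
    rw [← Finset.sum_erase (f := fun j : ℕ => |(i:ℝ) - (j:ℝ)| ^ (-h)) _ hzero]
    apply image_sum_le hh0 hh1 M _ (fun j => j - i - 1)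
    · intro x hx y hy hxy
      simp only [Finset.mem_erase, hA, Finset.mem_filter, Finset.mem_Icc] at hx hy
      omega
    · intro x hx
      simp only [Finset.mem_erase, hA, Finset.mem_filter, Finset.mem_Icc] at hx
      simp only [Finset.mem_range]
      omega
    · intro x hx
      simp only [Finset.mem_erase, hA, Finset.mem_filter, Finset.mem_Icc] at hx
      have hxi : i < x := by omega
      have h1 : ((x - i - 1 : ℕ) : ℝ) + 1 = (x:ℝ) - (i:ℝ) := by
        have h2 : (x - i - 1) + 1 + i = x := by omega
        have h3 := congrArg (Nat.cast : ℕ → ℝ) h2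
        push_cast at h3
        linarith
      rw [abs_sub_comm, h1, abs_of_nonneg (sub_nonneg.mpr (by exact_mod_cast hxi.le))]
  linarith

lemma gap_lb {p : ℝ} (hp : 0 < p) (M i j : ℕ) (hM : 1 ≤ M)
    (hi : i ∈ Finset.Icc M (2 * M - 1)) (hj : j ∈ Finset.Icc M (2 * M - 1)) (hij : i < j) :
    (p * min 1 ((2:ℝ) ^ (p - 1)) / (4:ℝ) ^ p) * ((j:ℝ) - (i:ℝ)) * (M:ℝ) ^ (-(p + 1))
      ≤ 1 / (i:ℝ) ^ p - 1 / (j:ℝ) ^ p := by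
  simp only [Finset.mem_Icc] at hi hj
  have hMpos : (0:ℝ) < M := by exact_mod_cast Nat.pos_of_ne_zero (by omega)
  have hipos : (0:ℝ) < i := by exact_mod_cast Nat.pos_of_ne_zero (by omega)
  have hjpos : (0:ℝ) < j := by exact_mod_cast Nat.pos_of_ne_zero (by omega)
  have hab : (i:ℝ) < j := by exact_mod_cast hij
  have hiM : (M:ℝ) ≤ i := by exact_mod_cast hi.1
  have hi2M : (i:ℝ) ≤ 2 * M := by
    have : i ≤ 2 * M := by omega
    exact_mod_cast this
  have hj2M : (j:ℝ) ≤ 2 * M := by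
    have : j ≤ 2 * M := by omega
    exact_mod_cast this
  obtain ⟨ξ, hξ, heq⟩ := mvt_rpow hp.le hipos.le hab
  have hξpos : 0 < ξ := lt_trans hipos hξ.1
  have hξM : (M:ℝ) ≤ ξ := le_trans hiM hξ.1.le
  have hξ2M : ξ ≤ 2 * M := le_trans hξ.2.le hj2M
  set c₁ : ℝ := min 1 ((2:ℝ) ^ (p - 1)) with hc₁
  have hc₁pos : 0 < c₁ := lt_min one_pos (Real.rpow_pos_of_pos two_pos _)
  have hMh : (0:ℝ) < (M:ℝ) ^ (p - 1) := Real.rpow_pos_of_pos hMpos _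
  have hc1 : c₁ * (M:ℝ) ^ (p - 1) ≤ ξ ^ (p - 1) := by
    rcases le_total 1 p with h1 | h1
    · have hmono : (M:ℝ) ^ (p - 1) ≤ ξ ^ (p - 1) :=
        Real.rpow_le_rpow hMpos.le hξM (by linarith)
      calc c₁ * (M:ℝ) ^ (p - 1) ≤ 1 * (M:ℝ) ^ (p - 1) := by
            apply mul_le_mul_of_nonneg_right (min_le_left _ _) hMh.le
        _ = (M:ℝ) ^ (p - 1) := one_mul _
        _ ≤ ξ ^ (p - 1) := hmono
    · have hmono : ((2:ℝ) * M) ^ (p - 1) ≤ ξ ^ (p - 1) :=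
        Real.rpow_le_rpow_of_nonpos hξpos hξ2M (by linarith)
      have hsplit : ((2:ℝ) * M) ^ (p - 1) = (2:ℝ) ^ (p - 1) * (M:ℝ) ^ (p - 1) :=
        Real.mul_rpow (by norm_num) hMpos.le
      calc c₁ * (M:ℝ) ^ (p - 1) ≤ (2:ℝ) ^ (p - 1) * (M:ℝ) ^ (p - 1) := by
            apply mul_le_mul_of_nonneg_right (min_le_right _ _) hMh.le
        _ = ((2:ℝ) * M) ^ (p - 1) := hsplit.symm
        _ ≤ ξ ^ (p - 1) := hmono
  have hipp : 0 < (i:ℝ) ^ p := Real.rpow_pos_of_pos hipos _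
  have hjpp : 0 < (j:ℝ) ^ p := Real.rpow_pos_of_pos hjpos _
  have hprod : (i:ℝ) ^ p * (j:ℝ) ^ p ≤ (4:ℝ) ^ p * (M:ℝ) ^ (2 * p) := by
    have hi2 : (i:ℝ) ^ p ≤ ((2:ℝ) * M) ^ p := Real.rpow_le_rpow hipos.le hi2M hp.le
    have hj2 : (j:ℝ) ^ p ≤ ((2:ℝ) * M) ^ p := Real.rpow_le_rpow hjpos.le hj2M hp.le
    have h2M : (0:ℝ) < ((2:ℝ) * M) ^ p := Real.rpow_pos_of_pos (by linarith) _
    have key : ((2:ℝ) * M) ^ p * ((2:ℝ) * M) ^ p = (4:ℝ) ^ p * (M:ℝ) ^ (2 * p) := by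
      have e4 : (4:ℝ) ^ p = (2:ℝ) ^ p * (2:ℝ) ^ p := by
        rw [← Real.mul_rpow (by norm_num) (by norm_num)]
        norm_num
      have eM : (M:ℝ) ^ (2 * p) = (M:ℝ) ^ p * (M:ℝ) ^ p := by
        rw [show 2 * p = p + p by ring, Real.rpow_add hMpos]
      rw [Real.mul_rpow (by norm_num) hMpos.le, e4, eM]
      ring
    calc (i:ℝ) ^ p * (j:ℝ) ^ p ≤ ((2:ℝ) * M) ^ p * ((2:ℝ) * M) ^ p := by
          apply mul_le_mul hi2 hj2 hjpp.le h2M.le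
      _ = (4:ℝ) ^ p * (M:ℝ) ^ (2 * p) := key
  set t : ℝ := (j:ℝ) - (i:ℝ) with hT
  have ht : 0 ≤ t := by simp only [hT]; linarith
  have hrw : 1 / (i:ℝ) ^ p - 1 / (j:ℝ) ^ p
      = ((j:ℝ) ^ p - (i:ℝ) ^ p) / ((i:ℝ) ^ p * (j:ℝ) ^ p) := by
    field_simp
  rw [hrw, heq]
  rw [le_div_iff₀ (by positivity)]
  have h4p : (0:ℝ) < (4:ℝ) ^ p := Real.rpow_pos_of_pos (by norm_num) _
  calc p * c₁ / (4:ℝ) ^ p * t * (M:ℝ) ^ (-(p + 1)) * ((i:ℝ) ^ p * (j:ℝ) ^ p)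
      ≤ p * c₁ / (4:ℝ) ^ p * t * (M:ℝ) ^ (-(p + 1)) * ((4:ℝ) ^ p * (M:ℝ) ^ (2 * p)) := by
        apply mul_le_mul_of_nonneg_left hprod
        have : (0:ℝ) ≤ p * c₁ / (4:ℝ) ^ p := by positivity
        exact mul_nonneg (mul_nonneg this ht) (Real.rpow_nonneg hMpos.le _)
    _ = p * c₁ * t * (M:ℝ) ^ (p - 1) := by
        have e1 : (M:ℝ) ^ (-(p + 1)) * (M:ℝ) ^ (2 * p) = (M:ℝ) ^ (p - 1) := by
          rw [← Real.rpow_add hMpos]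
          congr 1
          ring
        have e2 : p * c₁ / (4:ℝ) ^ p * (4:ℝ) ^ p = p * c₁ := div_mul_cancel₀ _ h4p.ne'
        calc p * c₁ / (4:ℝ) ^ p * t * (M:ℝ) ^ (-(p + 1)) * ((4:ℝ) ^ p * (M:ℝ) ^ (2 * p))
            = (p * c₁ / (4:ℝ) ^ p * (4:ℝ) ^ p) * t
              * ((M:ℝ) ^ (-(p + 1)) * (M:ℝ) ^ (2 * p)) := by ring
          _ = p * c₁ * t * (M:ℝ) ^ (p - 1) := by rw [e1, e2]
    _ ≤ p * ξ ^ (p - 1) * t := by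
        have h5 : c₁ * (M:ℝ) ^ (p - 1) * (p * t) ≤ ξ ^ (p - 1) * (p * t) :=
          mul_le_mul_of_nonneg_right hc1 (mul_nonneg hp.le ht)
        nlinarith [h5]

lemma term_bound {p h : ℝ} (hp : 0 < p) (hh0 : 0 < h) (hh1 : h < 1) {ρ : ℝ} (hρ : 0 < ρ)
    (M i j : ℕ) (hM : 1 ≤ M) (hi : i ∈ Finset.Icc M (2 * M - 1))
    (hj : j ∈ Finset.Icc M (2 * M - 1)) (hij : i < j) :
    min 1 (ρ / |1 / (i:ℝ) ^ p - 1 / (j:ℝ) ^ p| ^ h)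
      ≤ (p * min 1 ((2:ℝ) ^ (p - 1)) / (4:ℝ) ^ p) ^ (-h) * ρ * (M:ℝ) ^ ((p + 1) * h)
        * |(i:ℝ) - (j:ℝ)| ^ (-h) := by
  have hMpos : (0:ℝ) < M := by exact_mod_cast Nat.pos_of_ne_zero (by omega)
  set κ : ℝ := p * min 1 ((2:ℝ) ^ (p - 1)) / (4:ℝ) ^ p with hκdef
  have hκ : 0 < κ :=
    div_pos (mul_pos hp (lt_min one_pos (Real.rpow_pos_of_pos two_pos _)))
      (Real.rpow_pos_of_pos (by norm_num) _)
  have hgap := gap_lb hp M i j hM hi hj hij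
  have hijR : (i:ℝ) < (j:ℝ) := by exact_mod_cast hij
  have htpos : (0:ℝ) < (j:ℝ) - (i:ℝ) := by linarith
  have habs : |(i:ℝ) - (j:ℝ)| = (j:ℝ) - (i:ℝ) := by
    rw [abs_sub_comm]
    exact abs_of_pos htpos
  set L : ℝ := κ * ((j:ℝ) - (i:ℝ)) * (M:ℝ) ^ (-(p + 1)) with hLdef
  have hL : 0 < L := mul_pos (mul_pos hκ htpos) (Real.rpow_pos_of_pos hMpos _)
  set δ : ℝ := 1 / (i:ℝ) ^ p - 1 / (j:ℝ) ^ p with hδdef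
  have hδ : 0 < δ := lt_of_lt_of_le hL hgap
  calc min 1 (ρ / |δ| ^ h) ≤ ρ / |δ| ^ h := min_le_right _ _
    _ = ρ * δ ^ (-h) := by rw [abs_of_pos hδ, Real.rpow_neg hδ.le, div_eq_mul_inv]
    _ ≤ ρ * L ^ (-h) := mul_le_mul_of_nonneg_left
        (Real.rpow_le_rpow_of_nonpos hL hgap (neg_nonpos.mpr hh0.le)) hρ.le
    _ = κ ^ (-h) * ρ * (M:ℝ) ^ ((p + 1) * h) * ((j:ℝ) - (i:ℝ)) ^ (-h) := by
        rw [hLdef, Real.mul_rpow (mul_nonneg hκ.le htpos.le) (Real.rpow_nonneg hMpos.le _),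
          Real.mul_rpow hκ.le htpos.le, ← Real.rpow_mul hMpos.le]
        rw [show -(p + 1) * -h = (p + 1) * h by ring]
        ring
    _ = κ ^ (-h) * ρ * (M:ℝ) ^ ((p + 1) * h) * |(i:ℝ) - (j:ℝ)| ^ (-h) := by rw [habs]

theorem discrete_energy_bound (p h : ℝ) (hp : 0 < p) (hh0 : 0 < h) (hh1 : h < 1) :
    ∃ c > 0, ∀ (θ s : ℝ), 0 < θ → θ ≤ 1 → 0 < s → s ≤ 1 →
      ∀ (M : ℕ), 1 ≤ M → ∀ (r : ℝ), 0 < r → r < 1 →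
        (1 / (M : ℝ) ^ 2) *
          ∑ i ∈ Finset.Icc M (2 * M - 1), ∑ j ∈ Finset.Icc M (2 * M - 1),
            (if (1 / (i : ℝ) ^ p - 1 / (j : ℝ) ^ p) = 0 then (1 : ℝ)
             else min 1 (r ^ (θ * (1 - s) + s) / |1 / (i : ℝ) ^ p - 1 / (j : ℝ) ^ p| ^ h)) ≤
        1 / (M : ℝ) + c * (M : ℝ) ^ (p * h) * r ^ (θ * (1 - s) + s) := by
  have h1h : (0:ℝ) < 1 - h := by linarith
  set κ : ℝ := p * min 1 ((2:ℝ) ^ (p - 1)) / (4:ℝ) ^ p with hκdef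
  have hκ : 0 < κ :=
    div_pos (mul_pos hp (lt_min one_pos (Real.rpow_pos_of_pos two_pos _)))
      (Real.rpow_pos_of_pos (by norm_num) _)
  refine ⟨2 * κ ^ (-h) / (1 - h),
    div_pos (mul_pos two_pos (Real.rpow_pos_of_pos hκ _)) h1h, ?_⟩
  intro θ s hθ hθ1 hs hs1 M hM r hr hr1
  set ρ : ℝ := r ^ (θ * (1 - s) + s) with hρdef
  have hρ : 0 < ρ := Real.rpow_pos_of_pos hr _
  have hMpos : (0:ℝ) < M := by exact_mod_cast hM
  set A := Finset.Icc M (2 * M - 1) with hA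
  have hcard : A.card = M := by rw [hA, Nat.card_Icc]; omega
  set B : ℝ := κ ^ (-h) * ρ * (M:ℝ) ^ ((p + 1) * h) with hB
  have hBpos : (0:ℝ) ≤ B := by
    rw [hB]
    exact mul_nonneg (mul_nonneg (Real.rpow_nonneg hκ.le _) hρ.le) (Real.rpow_nonneg hMpos.le _)
  have hpt : ∀ i ∈ A, ∀ j ∈ A,
      (if (1 / (i : ℝ) ^ p - 1 / (j : ℝ) ^ p) = 0 then (1 : ℝ)
       else min 1 (ρ / |1 / (i : ℝ) ^ p - 1 / (j : ℝ) ^ p| ^ h))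
      ≤ (if i = j then (1:ℝ) else 0) + B * |(i:ℝ) - (j:ℝ)| ^ (-h) := by
    intro i hi j hj
    rcases lt_trichotomy i j with hij | hij | hij
    · have hb := term_bound hp hh0 hh1 hρ M i j hM hi hj hij
      have htpos : (0:ℝ) < (j:ℝ) - (i:ℝ) := by
        have : (i:ℝ) < (j:ℝ) := by exact_mod_cast hij
        linarith
      have hL : 0 < κ * ((j:ℝ) - (i:ℝ)) * (M:ℝ) ^ (-(p + 1)) :=
        mul_pos (mul_pos hκ htpos) (Real.rpow_pos_of_pos hMpos _)
      have hδ : (1 / (i : ℝ) ^ p - 1 / (j : ℝ) ^ p) ≠ 0 :=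
        (lt_of_lt_of_le hL (gap_lb hp M i j hM hi hj hij)).ne'
      rw [if_neg hδ, if_neg (Nat.ne_of_lt hij), zero_add, hB]
      exact hb
    · subst hij
      rw [if_pos (sub_self _), if_pos rfl]
      have hz : |(i:ℝ) - (i:ℝ)| ^ (-h) = 0 := by
        rw [sub_self, abs_zero, Real.zero_rpow (neg_ne_zero.mpr hh0.ne')]
      rw [hz, mul_zero, add_zero]
    · have hb := term_bound hp hh0 hh1 hρ M j i hM hj hi hij
      rw [abs_sub_comm (1 / (j:ℝ) ^ p), abs_sub_comm ((j:ℝ))] at hb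
      have htpos : (0:ℝ) < (i:ℝ) - (j:ℝ) := by
        have : (j:ℝ) < (i:ℝ) := by exact_mod_cast hij
        linarith
      have hL : 0 < κ * ((i:ℝ) - (j:ℝ)) * (M:ℝ) ^ (-(p + 1)) :=
        mul_pos (mul_pos hκ htpos) (Real.rpow_pos_of_pos hMpos _)
      have hδ' : (1 / (j : ℝ) ^ p - 1 / (i : ℝ) ^ p) ≠ 0 :=
        (lt_of_lt_of_le hL (gap_lb hp M j i hM hj hi hij)).ne'
      have hδ : (1 / (i : ℝ) ^ p - 1 / (j : ℝ) ^ p) ≠ 0 :=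
        sub_ne_zero.mpr (sub_ne_zero.mp hδ').symm
      rw [if_neg hδ, if_neg (ne_of_gt hij), zero_add, hB]
      exact hb
  have hsum : ∑ i ∈ A, ∑ j ∈ A,
      (if (1 / (i : ℝ) ^ p - 1 / (j : ℝ) ^ p) = 0 then (1 : ℝ)
       else min 1 (ρ / |1 / (i : ℝ) ^ p - 1 / (j : ℝ) ^ p| ^ h))
      ≤ (M:ℝ) + B * ((M:ℝ) * (2 * ((M:ℝ) ^ (1 - h) / (1 - h)))) := by
    calc ∑ i ∈ A, ∑ j ∈ A,
        (if (1 / (i : ℝ) ^ p - 1 / (j : ℝ) ^ p) = 0 then (1 : ℝ)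
         else min 1 (ρ / |1 / (i : ℝ) ^ p - 1 / (j : ℝ) ^ p| ^ h))
        ≤ ∑ i ∈ A, ∑ j ∈ A, ((if i = j then (1:ℝ) else 0) + B * |(i:ℝ) - (j:ℝ)| ^ (-h)) :=
          Finset.sum_le_sum fun i hi => Finset.sum_le_sum fun j hj => hpt i hi j hj
      _ = ∑ i ∈ A, ((∑ j ∈ A, if i = j then (1:ℝ) else 0)
            + B * ∑ j ∈ A, |(i:ℝ) - (j:ℝ)| ^ (-h)) := by
          refine Finset.sum_congr rfl fun i _ => ?_
          rw [Finset.sum_add_distrib, Finset.mul_sum]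
      _ ≤ ∑ i ∈ A, ((1:ℝ) + B * (2 * ((M:ℝ) ^ (1 - h) / (1 - h)))) := by
          refine Finset.sum_le_sum fun i hi => ?_
          have e1 : (∑ j ∈ A, if i = j then (1:ℝ) else 0) = 1 := by
            rw [Finset.sum_ite_eq, if_pos hi]
          rw [e1]
          exact add_le_add_right
            (mul_le_mul_of_nonneg_left (slice_sum hh0 hh1 M i hM hi) hBpos) 1
      _ = (M:ℝ) + B * ((M:ℝ) * (2 * ((M:ℝ) ^ (1 - h) / (1 - h)))) := by
          rw [Finset.sum_const, hcard, nsmul_eq_mul]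
          ring
  have hstep := mul_le_mul_of_nonneg_left hsum
    (by positivity : (0:ℝ) ≤ 1 / (M:ℝ) ^ 2)
  refine le_trans hstep (le_of_eq ?_)
  have e1 : (M:ℝ) ^ ((p + 1) * h) * (M:ℝ) ^ (1 - h) = (M:ℝ) ^ (p * h) * (M:ℝ) := by
    rw [← Real.rpow_add hMpos, show (p + 1) * h + (1 - h) = p * h + 1 by ring,
      Real.rpow_add hMpos, Real.rpow_one]
  have eq2 : B * ((M:ℝ) * (2 * ((M:ℝ) ^ (1 - h) / (1 - h))))
      = (2 * κ ^ (-h) / (1 - h)) * (M:ℝ) ^ (p * h) * ρ * (M:ℝ) ^ 2 := by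
    rw [hB]
    calc κ ^ (-h) * ρ * (M:ℝ) ^ ((p + 1) * h) * ((M:ℝ) * (2 * ((M:ℝ) ^ (1 - h) / (1 - h))))
        = (2 * κ ^ (-h) * ρ * (M:ℝ) / (1 - h)) * ((M:ℝ) ^ ((p + 1) * h) * (M:ℝ) ^ (1 - h)) := by
          ring
      _ = (2 * κ ^ (-h) * ρ * (M:ℝ) / (1 - h)) * ((M:ℝ) ^ (p * h) * (M:ℝ)) := by rw [e1]
      _ = (2 * κ ^ (-h) / (1 - h)) * (M:ℝ) ^ (p * h) * ρ * (M:ℝ) ^ 2 := by ring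
  rw [eq2]
  field_simp
end

section
/- Fix p > 0, h ∈ (0,1), θ ∈ (0,1], s ∈ (0,1]. There is c > 0 such that for every 0 < r < 1 there exists a Borel probability measure μ_r supported on F_p = {0} ∪ {1/k^p : k ≥ 1} with ∬ min{1, r^{θ(1−s)+s}/|x−y|^h} dμ_r(x) dμ_r(y) ≤ c · r^{(θ(1−s)+s)/(1+ph)}. -/
open Real MeasureTheory ENNReal

-- helper 1: everything integrable wrt dirac
lemma integrable_dirac'' (f : ℝ → ℝ) (a : ℝ) : Integrable f (Measure.dirac a) := by
  have h : f =ᵐ[Measure.dirac a] fun _ => f a := by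
    rw [MeasureTheory.ae_dirac_eq]; exact Filter.eventually_pure.2 rfl
  exact (integrable_const (f a)).congr h.symm

-- helper 2: integral wrt scaled sum of diracs
lemma integral_scaled_dirac_sum (T : Finset ℕ) (x : ℕ → ℝ) (f : ℝ → ℝ) (c : ℝ≥0∞) :
    ∫ y, f y ∂(c • ∑ k ∈ T, Measure.dirac (x k)) = c.toReal * ∑ k ∈ T, f (x k) := by
  rw [integral_smul_measure, integral_finset_sum_measure (fun i _ => integrable_dirac'' f (x i))]
  simp [integral_dirac]

-- helper 3: bernoulli-type rpow lower bound
lemma rpow_sub_lower (p : ℝ) (hp : 0 < p) (j k : ℝ) (hj : 0 < j) (hjk : j ≤ k) :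
    j ^ p * (p * (k - j) / k) ≤ k ^ p - j ^ p := by
  have hk : 0 < k := lt_of_lt_of_le hj hjk
  have hlog : 1 - j / k ≤ Real.log (k / j) := by
    have h1 : Real.log (j / k) ≤ j / k - 1 := Real.log_le_sub_one_of_pos (by positivity)
    have h2 : Real.log (k / j) = - Real.log (j / k) := by
      rw [← Real.log_inv]; congr 1; field_simp
    linarith
  have hexp : 1 + p * Real.log (k / j) ≤ (k / j) ^ p := by
    have := Real.add_one_le_exp (p * Real.log (k / j))
    have heq : (k / j) ^ p = Real.exp (p * Real.log (k / j)) := by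
      rw [Real.rpow_def_of_pos (by positivity), mul_comm]
    linarith
  have hdiv : (k / j) ^ p = k ^ p / j ^ p := Real.div_rpow hk.le hj.le p
  have hjp : (0:ℝ) < j ^ p := Real.rpow_pos_of_pos hj p
  have hmul : p * (1 - j/k) ≤ p * Real.log (k/j) :=
    mul_le_mul_of_nonneg_left hlog hp.le
  have : 1 + p * (1 - j/k) ≤ k ^ p / j ^ p := by rw [hdiv] at hexp; linarith
  have := mul_le_mul_of_nonneg_left this hjp.le
  rw [mul_div_cancel₀ _ hjp.ne'] at this
  have hrw : 1 - j / k = (k - j) / k := by field_simp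
  rw [hrw] at this
  have goal' : j ^ p * (p * (k - j) / k) = j ^ p * (1 + p*((k-j)/k)) - j ^ p := by ring
  rw [goal']
  linarith

-- helper 4: sum of d^{-h} bound
lemma sum_rpow_inv_le (h : ℝ) (hh0 : 0 < h) (hh1 : h < 1) (M : ℕ) (hM : 1 ≤ M) :
    ∑ d ∈ Finset.Icc 1 M, ((d:ℝ)) ^ (-h) ≤ (1 + 1/(1-h)) * (M:ℝ) ^ (1-h) := by
  have h1h : (0:ℝ) < 1 - h := by linarith
  set f : ℝ → ℝ := fun x => x ^ (-h) with hf
  have hanti : AntitoneOn f (Set.Icc (((1:ℕ)):ℝ) ((M:ℕ):ℝ)) := by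
    intro x hx y hy hxy
    have hx0 : (0:ℝ) < x := lt_of_lt_of_le one_pos (by exact_mod_cast hx.1)
    have hy0 : (0:ℝ) < y := lt_of_lt_of_le hx0 hxy
    simp only [hf]
    rw [Real.rpow_neg hx0.le, Real.rpow_neg hy0.le]
    exact inv_anti₀ (Real.rpow_pos_of_pos hx0 h) (Real.rpow_le_rpow hx0.le hxy hh0.le)
  have key := AntitoneOn.sum_le_integral_Ico hM hanti
  have hint : ∫ x in ((1:ℕ):ℝ)..((M:ℕ):ℝ), f x ≤ (M:ℝ) ^ (1-h) / (1-h) := by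
    simp only [hf]
    rw [integral_rpow (Or.inl (by linarith : (-1:ℝ) < -h))]
    have e1 : ((1:ℕ):ℝ) ^ (-h + 1) = 1 := by rw [Nat.cast_one, Real.one_rpow]
    have e2 : (-h + 1) = 1 - h := by ring
    rw [e1, e2]
    have h2 : (M:ℝ) ^ (1-h) - 1 ≤ (M:ℝ) ^ (1-h) := by linarith
    gcongr
  -- rewrite the sum over Icc 1 M
  have hsplit : ∑ d ∈ Finset.Icc 1 M, f d = f 1 + ∑ i ∈ Finset.Ico 1 M, f ((i+1 : ℕ)) := by
    have e3 : ∑ i ∈ Finset.Ico 1 M, f ((i+1 : ℕ)) = ∑ d ∈ Finset.Ico 2 (M+1), f d := by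
      rw [show (2:ℕ) = 1 + 1 from rfl, show M + 1 = M + 1 from rfl,
        ← Finset.map_add_right_Ico 1 M 1, Finset.sum_map]
      rfl
    rw [e3, Finset.Icc_eq_cons_Ioc hM, Finset.sum_cons,
      show Finset.Ico 2 (M+1) = Finset.Ioc 1 M by ext a; simp; omega]
    norm_num
  have hf1 : f 1 = 1 := by simp [hf]
  have hMpow : (1:ℝ) ≤ (M:ℝ) ^ (1-h) :=
    Real.one_le_rpow (by exact_mod_cast hM) h1h.le
  calc ∑ d ∈ Finset.Icc 1 M, ((d:ℝ)) ^ (-h) = f 1 + ∑ i ∈ Finset.Ico 1 M, f ((i+1 : ℕ)) := hsplit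
    _ ≤ 1 + (M:ℝ) ^ (1-h) / (1-h) := by rw [hf1]; exact add_le_add_right (le_trans key hint) 1
    _ ≤ (1 + 1/(1-h)) * (M:ℝ) ^ (1-h) := by
        rw [add_mul, one_mul, div_mul_eq_mul_div, one_mul]
        exact add_le_add hMpow (le_refl _)

-- helper 5: gap lower bound
lemma gap_lower (p : ℝ) (hp : 0 < p) (M j k : ℕ) (hM : 1 ≤ M) (hj : M ≤ j) (hjk : j < k)
    (hk : k < 2*M) :
    p * ((k - j : ℕ) : ℝ) / ((2*M:ℕ):ℝ) ^ (1+p) ≤ 1/(j:ℝ)^p - 1/(k:ℝ)^p := by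
  have hJ : (0:ℝ) < j := by exact_mod_cast lt_of_lt_of_le hM hj
  have hK : (0:ℝ) < k := by exact_mod_cast lt_of_le_of_lt (Nat.zero_le j) hjk
  have hJK : (j:ℝ) ≤ (k:ℝ) := by exact_mod_cast hjk.le
  have hK2M : (k:ℝ) ≤ ((2*M:ℕ):ℝ) := by exact_mod_cast hk.le
  have h2M : (0:ℝ) < ((2*M:ℕ):ℝ) := lt_of_lt_of_le hK hK2M
  have key := rpow_sub_lower p hp (j:ℝ) (k:ℝ) hJ hJK
  have hJp : (0:ℝ) < (j:ℝ)^p := Real.rpow_pos_of_pos hJ p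
  have hKp : (0:ℝ) < (k:ℝ)^p := Real.rpow_pos_of_pos hK p
  have hcast : ((k - j : ℕ) : ℝ) = (k:ℝ) - (j:ℝ) := by
    rw [Nat.cast_sub hjk.le]
  have hnum : (0:ℝ) ≤ p * ((k:ℝ) - (j:ℝ)) := by
    apply mul_nonneg hp.le; linarith
  have step1 : p * ((k:ℝ) - (j:ℝ)) / ((k:ℝ) * (k:ℝ)^p) ≤ 1/(j:ℝ)^p - 1/(k:ℝ)^p := by
    have e1 : 1/(j:ℝ)^p - 1/(k:ℝ)^p = ((k:ℝ)^p - (j:ℝ)^p)/((j:ℝ)^p * (k:ℝ)^p) := by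
      field_simp
    have e2 : p * ((k:ℝ) - (j:ℝ)) / ((k:ℝ) * (k:ℝ)^p)
        = ((j:ℝ)^p * (p * ((k:ℝ) - (j:ℝ)) / (k:ℝ)))/((j:ℝ)^p * (k:ℝ)^p) := by
      field_simp
    rw [e1, e2]
    gcongr
  have step2 : p * ((k:ℝ) - (j:ℝ)) / (((2*M:ℕ):ℝ)) ^ (1+p)
      ≤ p * ((k:ℝ) - (j:ℝ)) / ((k:ℝ) * (k:ℝ)^p) := by
    have e3 : (((2*M:ℕ):ℝ)) ^ (1+p) = ((2*M:ℕ):ℝ) * ((2*M:ℕ):ℝ)^p := by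
      rw [Real.rpow_add h2M, Real.rpow_one]
    rw [e3]
    have hden : (0:ℝ) < (k:ℝ) * (k:ℝ)^p := by positivity
    apply div_le_div_of_nonneg_left hnum hden
    exact mul_le_mul hK2M (Real.rpow_le_rpow hK.le hK2M hp.le) hKp.le h2M.le
  rw [hcast]
  exact le_trans step2 step1

-- helper 6: off-diagonal nat-distance sum bound
lemma offdiag_sum_le (h : ℝ) (hh0 : 0 < h) (M j : ℕ) (hM : 1 ≤ M)
    (hj : j ∈ Finset.Ico M (2*M)) :
    ∑ k ∈ (Finset.Ico M (2*M)).erase j, ((Nat.dist j k : ℝ)) ^ (-h)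
      ≤ 2 * ∑ d ∈ Finset.Icc 1 M, ((d:ℝ)) ^ (-h) := by
  simp only [Finset.mem_Ico] at hj
  set T := Finset.Ico M (2*M) with hT
  set A := T.filter (fun k => k < j) with hA
  set B := T.filter (fun k => j < k) with hB
  have hunion : T.erase j = A ∪ B := by
    ext a
    simp only [hA, hB, Finset.mem_erase, Finset.mem_union, Finset.mem_filter, hT,
      Finset.mem_Ico]
    omega
  have hdisj : Disjoint A B := by
    rw [Finset.disjoint_left]
    intro a ha hb
    simp only [hA, hB, Finset.mem_filter] at ha hb
    omega
  rw [hunion, Finset.sum_union hdisj]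
  have hS_nonneg : ∀ d : ℕ, (0:ℝ) ≤ ((d:ℕ):ℝ) ^ (-h) := fun d => Real.rpow_nonneg (by positivity) _
  have hAbound : ∑ k ∈ A, ((Nat.dist j k : ℝ)) ^ (-h) ≤ ∑ d ∈ Finset.Icc 1 M, ((d:ℝ)) ^ (-h) := by
    have hinj : ∀ a ∈ A, ∀ b ∈ A, j - a = j - b → a = b := by
      intro a ha b hb hab
      simp only [hA, Finset.mem_filter] at ha hb
      omega
    have e1 : ∑ k ∈ A, ((Nat.dist j k : ℝ)) ^ (-h) = ∑ d ∈ A.image (fun k => j - k), ((d:ℝ)) ^ (-h) := by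
      rw [Finset.sum_image hinj]
      apply Finset.sum_congr rfl
      intro k hk
      simp only [hA, Finset.mem_filter] at hk
      rw [Nat.dist_eq_sub_of_le_right hk.2.le]
    rw [e1]
    apply Finset.sum_le_sum_of_subset_of_nonneg
    · intro d hd
      simp only [Finset.mem_image, hA, Finset.mem_filter, hT, Finset.mem_Ico] at hd
      obtain ⟨k, hk, rfl⟩ := hd
      simp only [Finset.mem_Icc]
      omega
    · intro d _ _
      exact hS_nonneg d
  have hBbound : ∑ k ∈ B, ((Nat.dist j k : ℝ)) ^ (-h) ≤ ∑ d ∈ Finset.Icc 1 M, ((d:ℝ)) ^ (-h) := by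
    have hinj : ∀ a ∈ B, ∀ b ∈ B, a - j = b - j → a = b := by
      intro a ha b hb hab
      simp only [hB, Finset.mem_filter] at ha hb
      omega
    have e1 : ∑ k ∈ B, ((Nat.dist j k : ℝ)) ^ (-h) = ∑ d ∈ B.image (fun k => k - j), ((d:ℝ)) ^ (-h) := by
      rw [Finset.sum_image hinj]
      apply Finset.sum_congr rfl
      intro k hk
      simp only [hB, Finset.mem_filter] at hk
      rw [Nat.dist_eq_sub_of_le hk.2.le]
    rw [e1]
    apply Finset.sum_le_sum_of_subset_of_nonneg
    · intro d hd
      simp only [Finset.mem_image, hB, Finset.mem_filter, hT, Finset.mem_Ico] at hd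
      obtain ⟨k, hk, rfl⟩ := hd
      simp only [Finset.mem_Icc]
      omega
    · intro d _ _
      exact hS_nonneg d
  linarith

-- helper 7: pointwise kernel bound for j < k
lemma kernel_le (p h : ℝ) (hp : 0 < p) (hh0 : 0 < h) (R : ℝ) (hR : 0 < R)
    (M j k : ℕ) (hM : 1 ≤ M) (hj : M ≤ j) (hjk : j < k) (hk : k < 2*M) :
    (if (1/(j:ℝ)^p) - (1/(k:ℝ)^p) = 0 then (1:ℝ)
      else min 1 (R / |1/(j:ℝ)^p - 1/(k:ℝ)^p| ^ h))
    ≤ (R * p^(-h) * (((2*M:ℕ)):ℝ)^((1+p)*h)) * ((Nat.dist j k : ℝ)) ^ (-h) := by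
  set d : ℝ := ((k - j : ℕ) : ℝ) with hd
  have hd1 : (1:ℝ) ≤ d := by
    rw [hd]; exact_mod_cast Nat.one_le_iff_ne_zero.2 (by omega)
  have hd0 : (0:ℝ) < d := lt_of_lt_of_le one_pos hd1
  have h2M : (0:ℝ) < (((2*M:ℕ)):ℝ) := by
    have : 0 < 2*M := by omega
    exact_mod_cast this
  set B : ℝ := (((2*M:ℕ)):ℝ) ^ (1+p) with hB
  have hBpos : 0 < B := Real.rpow_pos_of_pos h2M _
  set δ : ℝ := p * d / B with hδ
  have hδpos : 0 < δ := by positivity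
  have hgap : δ ≤ 1/(j:ℝ)^p - 1/(k:ℝ)^p := gap_lower p hp M j k hM hj hjk hk
  have hdiffpos : 0 < 1/(j:ℝ)^p - 1/(k:ℝ)^p := lt_of_lt_of_le hδpos hgap
  rw [if_neg hdiffpos.ne', abs_of_pos hdiffpos]
  have hdist : ((Nat.dist j k : ℝ)) = d := by
    rw [hd, Nat.dist_eq_sub_of_le hjk.le]
  rw [hdist]
  have step1 : min 1 (R / (1/(j:ℝ)^p - 1/(k:ℝ)^p) ^ h) ≤ R / δ ^ h := by
    refine le_trans (min_le_right _ _) ?_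
    exact div_le_div_of_nonneg_left hR.le (Real.rpow_pos_of_pos hδpos h)
      (Real.rpow_le_rpow hδpos.le hgap hh0.le)
  refine le_trans step1 (le_of_eq ?_)
  have e1 : δ ^ h = p ^ h * d ^ h / B ^ h := by
    rw [hδ, Real.div_rpow (by positivity) hBpos.le, Real.mul_rpow hp.le hd0.le]
  have e2 : B ^ h = (((2*M:ℕ)):ℝ) ^ ((1+p)*h) := by
    rw [hB, ← Real.rpow_mul h2M.le]
  have hph : (0:ℝ) < p ^ h := Real.rpow_pos_of_pos hp h
  have hdh : (0:ℝ) < d ^ h := Real.rpow_pos_of_pos hd0 h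
  rw [e1, ← e2, Real.rpow_neg hp.le, Real.rpow_neg hd0.le]
  field_simp

theorem energy_measure_on_Fp (p h θ s : ℝ) (hp : 0 < p) (hh0 : 0 < h) (hh1 : h < 1)
    (hθ0 : 0 < θ) (hθ1 : θ ≤ 1) (hs0 : 0 < s) (hs1 : s ≤ 1) :
    ∃ c > 0, ∀ r : ℝ, 0 < r → r < 1 →
      ∃ μ : Measure ℝ, IsProbabilityMeasure μ ∧
        μ ({0} ∪ {x : ℝ | ∃ k : ℕ, 1 ≤ k ∧ x = 1 / (k : ℝ) ^ p}) = 1 ∧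
        (∫ x, ∫ y, (if x - y = 0 then (1 : ℝ)
            else min 1 (r ^ (θ * (1 - s) + s) / |x - y| ^ h)) ∂μ ∂μ) ≤
          c * r ^ ((θ * (1 - s) + s) / (1 + p * h)) := by
  have h1h : (0:ℝ) < 1 - h := by linarith
  set β := θ * (1 - s) + s with hβdef
  have hβ : 0 < β := by nlinarith
  have hdenom : (0:ℝ) < 1 + p*h := by positivity
  set γ := β / (1 + p * h) with hγdef
  have hγ : 0 < γ := div_pos hβ hdenom
  set C5 : ℝ := 2 * p^(-h) * (2:ℝ)^((1+p)*h) * (1 + 1/(1-h)) with hC5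
  have hC5pos : 0 < C5 := by positivity
  refine ⟨1 + C5 * (2:ℝ)^(p*h), by positivity, ?_⟩
  intro r hr0 hr1
  set M : ℕ := ⌈r ^ (-γ)⌉₊ with hMdef
  have hx0 : (0:ℝ) < r ^ (-γ) := Real.rpow_pos_of_pos hr0 _
  have hrγ1 : (1:ℝ) ≤ r ^ (-γ) :=
    Real.one_le_rpow_of_pos_of_le_one_of_nonpos hr0 hr1.le (by linarith)
  have hM1 : 1 ≤ M := Nat.one_le_ceil_iff.2 hx0
  have hMr : r ^ (-γ) ≤ (M:ℝ) := Nat.le_ceil _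
  have hm : (0:ℝ) < (M:ℝ) := by exact_mod_cast hM1
  have hMle : (M:ℝ) ≤ 2 * r ^ (-γ) := by
    have := Nat.ceil_lt_add_one hx0.le
    calc (M:ℝ) ≤ r ^ (-γ) + 1 := le_of_lt this
      _ ≤ 2 * r ^ (-γ) := by linarith
  set T := Finset.Ico M (2*M) with hT
  have hcard : T.card = M := by rw [hT, Nat.card_Ico]; omega
  set xp : ℕ → ℝ := fun k => 1 / (k:ℝ) ^ p with hxp
  refine ⟨((M:ℕ):ℝ≥0∞)⁻¹ • ∑ k ∈ T, Measure.dirac (xp k), ?_, ?_, ?_⟩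
  · -- probability measure
    constructor
    rw [Measure.smul_apply, Measure.coe_finset_sum, Finset.sum_apply]
    have : ∀ k ∈ T, Measure.dirac (xp k) Set.univ = 1 :=
      fun k _ => Measure.dirac_apply_of_mem (Set.mem_univ _)
    rw [Finset.sum_congr rfl this, Finset.sum_const, hcard]
    simp only [smul_eq_mul, nsmul_eq_mul, mul_one]
    rw [ENNReal.inv_mul_cancel]
    · exact_mod_cast (Nat.one_le_iff_ne_zero.1 hM1)
    · exact ENNReal.natCast_ne_top M
  · -- support
    rw [Measure.smul_apply, Measure.coe_finset_sum, Finset.sum_apply]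
    have : ∀ k ∈ T, Measure.dirac (xp k) ({0} ∪ {x : ℝ | ∃ k : ℕ, 1 ≤ k ∧ x = 1 / (k : ℝ) ^ p}) = 1 := by
      intro k hk
      apply Measure.dirac_apply_of_mem
      right
      refine ⟨k, ?_, rfl⟩
      rw [hT, Finset.mem_Ico] at hk
      omega
    rw [Finset.sum_congr rfl this, Finset.sum_const, hcard]
    simp only [smul_eq_mul, nsmul_eq_mul, mul_one]
    rw [ENNReal.inv_mul_cancel]
    · exact_mod_cast (Nat.one_le_iff_ne_zero.1 hM1)
    · exact ENNReal.natCast_ne_top M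
  · -- energy bound
    simp only [integral_scaled_dirac_sum, ENNReal.toReal_inv, ENNReal.toReal_natCast]
    set S := ∑ d ∈ Finset.Icc 1 M, ((d:ℝ)) ^ (-h) with hS
    have hSnn : 0 ≤ S := Finset.sum_nonneg fun d _ => Real.rpow_nonneg (by positivity) _
    set R := r ^ β with hR
    have hRpos : 0 < R := Real.rpow_pos_of_pos hr0 _
    set CK := R * p^(-h) * (((2*M:ℕ)):ℝ)^((1+p)*h) with hCK
    have hCKpos : 0 < CK := by
      have h2M : (0:ℝ) < ((2*M:ℕ):ℝ) := by
        have : 0 < 2*M := by omega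
        exact_mod_cast this
      have := Real.rpow_pos_of_pos hp (-h)
      have := Real.rpow_pos_of_pos h2M ((1+p)*h)
      positivity
    -- symmetric kernel shorthand
    set K : ℝ → ℝ → ℝ := fun x y => if x - y = 0 then (1:ℝ) else min 1 (R / |x - y| ^ h) with hK
    have hKsymm : ∀ a b : ℝ, K a b = K b a := by
      intro a b
      simp only [hK]
      rw [abs_sub_comm]
      congr 1
      · simp [sub_eq_zero, eq_comm]
    have hKle : ∀ j ∈ T, ∀ k ∈ T, j ≠ k →
        K (xp j) (xp k) ≤ CK * ((Nat.dist j k : ℝ)) ^ (-h) := by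
      intro j hj k hk hne
      rw [hT, Finset.mem_Ico] at hj hk
      rcases hne.lt_or_gt with hlt | hlt
      · exact kernel_le p h hp hh0 R hRpos M j k hM1 hj.1 hlt hk.2
      · rw [hKsymm, Nat.dist_comm]
        exact kernel_le p h hp hh0 R hRpos M k j hM1 hk.1 hlt hj.2
    -- inner sum bound
    have hinner : ∀ j ∈ T, ∑ k ∈ T, K (xp j) (xp k) ≤ 1 + CK * (2 * S) := by
      intro j hj
      rw [← Finset.add_sum_erase T _ hj]
      have hKjj : K (xp j) (xp j) = 1 := by simp [hK]
      rw [hKjj]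
      have hsum1 : ∑ k ∈ T.erase j, K (xp j) (xp k)
          ≤ ∑ k ∈ T.erase j, CK * ((Nat.dist j k : ℝ)) ^ (-h) := by
        apply Finset.sum_le_sum
        intro k hk
        exact hKle j hj k (Finset.mem_of_mem_erase hk) (Finset.ne_of_mem_erase hk).symm
      have hsum2 : ∑ k ∈ T.erase j, CK * ((Nat.dist j k : ℝ)) ^ (-h) ≤ CK * (2 * S) := by
        rw [← Finset.mul_sum]
        apply mul_le_mul_of_nonneg_left _ hCKpos.le
        exact offdiag_sum_le h hh0 M j hM1 hj
      linarith
    -- total bound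
    have htotal : (M:ℝ)⁻¹ * ∑ j ∈ T, ((M:ℝ)⁻¹ * ∑ k ∈ T, K (xp j) (xp k))
        ≤ (M:ℝ)⁻¹ * (1 + CK * (2 * S)) := by
      have : ∑ j ∈ T, ((M:ℝ)⁻¹ * ∑ k ∈ T, K (xp j) (xp k))
          ≤ ∑ j ∈ T, ((M:ℝ)⁻¹ * (1 + CK * (2 * S))) := by
        apply Finset.sum_le_sum
        intro j hj
        exact mul_le_mul_of_nonneg_left (hinner j hj) (by positivity)
      rw [Finset.sum_const, hcard] at this
      calc (M:ℝ)⁻¹ * ∑ j ∈ T, ((M:ℝ)⁻¹ * ∑ k ∈ T, K (xp j) (xp k))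
          ≤ (M:ℝ)⁻¹ * (M • ((M:ℝ)⁻¹ * (1 + CK * (2 * S)))) := by
            apply mul_le_mul_of_nonneg_left this (by positivity)
        _ = (M:ℝ)⁻¹ * (1 + CK * (2 * S)) := by
            rw [nsmul_eq_mul]
            field_simp
    refine le_trans htotal ?_
    -- final numeric estimate
    have hSle : S ≤ (1 + 1/(1-h)) * (M:ℝ) ^ (1-h) := sum_rpow_inv_le h hh0 hh1 M hM1
    have hminv : (M:ℝ)⁻¹ ≤ r ^ γ := by
      have h1 : (r ^ γ)⁻¹ ≤ (M:ℝ) := by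
        rw [← Real.rpow_neg hr0.le]; exact hMr
      have h2 := inv_anti₀ (by positivity : (0:ℝ) < (r ^ γ)⁻¹) h1
      rwa [inv_inv] at h2
    have hcast2M : ((2*M:ℕ):ℝ) = 2 * (M:ℝ) := by push_cast; ring
    have e2M : ((2*M:ℕ):ℝ)^((1+p)*h) = (2:ℝ)^((1+p)*h) * (M:ℝ)^((1+p)*h) := by
      rw [hcast2M, Real.mul_rpow (by norm_num) hm.le]
    have em : (M:ℝ)⁻¹ * ((M:ℝ)^((1+p)*h) * (M:ℝ)^(1-h)) = (M:ℝ)^(p*h) := by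
      rw [← Real.rpow_neg_one (M:ℝ), ← Real.rpow_add hm, ← Real.rpow_add hm]
      congr 1
      ring
    have hmph : (M:ℝ)^(p*h) ≤ (2:ℝ)^(p*h) * r^(-γ * (p*h)) := by
      calc (M:ℝ)^(p*h) ≤ (2 * r^(-γ))^(p*h) :=
            Real.rpow_le_rpow hm.le hMle (by positivity)
        _ = (2:ℝ)^(p*h) * (r^(-γ))^(p*h) := Real.mul_rpow (by norm_num) hx0.le
        _ = (2:ℝ)^(p*h) * r^(-γ*(p*h)) := by rw [← Real.rpow_mul hr0.le]
    have hexp : R * r^(-γ*(p*h)) = r^γ := by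
      rw [hR, ← Real.rpow_add hr0]
      congr 1
      rw [hγdef]
      field_simp
      ring
    have hB : (M:ℝ)⁻¹ * (CK * (2*S)) ≤ C5 * (2:ℝ)^(p*h) * r^γ := by
      have step1 : (M:ℝ)⁻¹ * (CK * (2*S)) ≤ (M:ℝ)⁻¹ * (CK * (2*((1+1/(1-h)) * (M:ℝ)^(1-h)))) := by
        gcongr
      have step2 : (M:ℝ)⁻¹ * (CK * (2*((1+1/(1-h)) * (M:ℝ)^(1-h)))) = C5 * (R * (M:ℝ)^(p*h)) := by
        rw [hCK, e2M, hC5, ← em]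
        ring
      have step3 : C5 * (R * (M:ℝ)^(p*h)) ≤ C5 * (R * ((2:ℝ)^(p*h) * r^(-γ*(p*h)))) := by
        gcongr
      have step4 : C5 * (R * ((2:ℝ)^(p*h) * r^(-γ*(p*h)))) = C5 * (2:ℝ)^(p*h) * r^γ := by
        rw [← hexp]
        ring
      rw [step2] at step1
      rw [step4] at step3
      linarith
    calc (M:ℝ)⁻¹ * (1 + CK * (2 * S)) = (M:ℝ)⁻¹ + (M:ℝ)⁻¹ * (CK * (2*S)) := by ring
      _ ≤ r^γ + C5 * (2:ℝ)^(p*h) * r^γ := add_le_add hminv hB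
      _ = (1 + C5 * (2:ℝ)^(p*h)) * r^γ := by ring
end

section
/- Let p > 0, h' > 0, 0 < θ ≤ 1, K ≥ 1, and let f : [0,1] → ℝ be a function with |f(x)| ≤ K x^{h'} for all x ∈ [0,1] and f(F_p ∩ [0,1]) its image of F_p = {0} ∪ {1/k^p : k ≥ 1}. Then for every s with θ/(ph' + θ) < s ≤ 1 and every 0 < r < 1, there is a cover {U_i} of f(F_p) by intervals with r ≤ |U_i| ≤ r^θ such that Σ_i |U_i|^s ≤ 2(1+K) r^{(s(ph'+θ)−θ)/(1+ph')} + r^{sθ}. -/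
set_option maxHeartbeats 1000000


open Real Set Metric

lemma abut_cover {a c : ℝ} (hc : 0 < c) {n : ℕ} (hn : 0 < n) {t : ℝ}
    (h1 : a ≤ t) (h2 : t ≤ a + n * c) :
    ∃ j : Fin n, a + (j : ℝ) * c ≤ t ∧ t ≤ a + ((j : ℝ) + 1) * c := by
  have hu0 : 0 ≤ t - a := by linarith
  set j0 := ⌊(t - a) / c⌋₊ with hj0
  by_cases hcase : j0 < n
  · refine ⟨⟨j0, hcase⟩, ?_, ?_⟩
    · have h := Nat.floor_le (div_nonneg hu0 hc.le)
      rw [← hj0] at h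
      have h' : (j0 : ℝ) * c ≤ t - a := by
        calc (j0 : ℝ) * c ≤ ((t - a) / c) * c := by nlinarith
          _ = t - a := by field_simp
      simp only []
      linarith
    · have h := Nat.lt_floor_add_one ((t - a) / c)
      rw [← hj0, div_lt_iff₀ hc] at h
      simp only []
      linarith
  · push_neg at hcase
    have h := (Nat.le_floor_iff (div_nonneg hu0 hc.le)).mp hcase
    have hnc : (n : ℝ) * c ≤ t - a := by
      rw [le_div_iff₀ hc] at h; linarith
    have hn1 : (1 : ℕ) ≤ n := hn
    refine ⟨⟨n - 1, Nat.sub_lt hn one_pos⟩, ?_, ?_⟩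
    · have : ((n - 1 : ℕ) : ℝ) = (n : ℝ) - 1 := by
        push_cast [Nat.cast_sub hn1]; ring
      simp only [this]
      nlinarith
    · have : ((n - 1 : ℕ) : ℝ) = (n : ℝ) - 1 := by
        push_cast [Nat.cast_sub hn1]; ring
      simp only [this]
      nlinarith

theorem explicit_cover_of_image (p h' θ K : ℝ) (hp : 0 < p) (hh' : 0 < h')
    (hθ0 : 0 < θ) (hθ1 : θ ≤ 1) (hK : 1 ≤ K)
    (f : ℝ → ℝ) (hf : ∀ x ∈ Set.Icc (0 : ℝ) 1, |f x| ≤ K * x ^ h')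
    (s : ℝ) (hs1 : θ / (p * h' + θ) < s) (hs2 : s ≤ 1)
    (r : ℝ) (hr0 : 0 < r) (hr1 : r < 1) :
    ∃ (N : ℕ) (U : Fin N → Set ℝ),
      (∀ i, ∃ a b : ℝ, U i = Set.Icc a b) ∧
      f '' ({0} ∪ {x : ℝ | ∃ k : ℕ, 1 ≤ k ∧ x = 1 / (k : ℝ) ^ p}) ⊆ ⋃ i, U i ∧
      (∀ i, r ≤ Metric.diam (U i) ∧ Metric.diam (U i) ≤ r ^ θ) ∧
      ∑ i, Metric.diam (U i) ^ s ≤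
        2 * (1 + K) * r ^ ((s * (p * h' + θ) - θ) / (1 + p * h')) + r ^ (s * θ) := by
  have hph : 0 < p * h' := mul_pos hp hh'
  have hden : (0:ℝ) < 1 + p * h' := by linarith
  have hs0 : 0 < s := lt_trans (div_pos hθ0 (by linarith)) hs1
  set E : ℝ := (s * (p * h' + θ) - θ) / (1 + p * h') with hEdef
  set β : ℝ := (θ * (s - 1) - s) / (1 + p * h') with hβdef
  have hβneg : β ≤ 0 := div_nonpos_of_nonpos_of_nonneg (by nlinarith) hden.le
  have hrβ : (0:ℝ) < r ^ β := rpow_pos_of_pos hr0 β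
  have hrβ1 : (1:ℝ) ≤ r ^ β := Real.one_le_rpow_of_pos_of_le_one_of_nonpos hr0 hr1.le hβneg
  set M : ℕ := ⌈r ^ β⌉₊ with hMdef
  have hM1 : 1 ≤ M := Nat.one_le_ceil_iff.mpr hrβ
  have hMpos : (0:ℝ) < (M:ℝ) := by exact_mod_cast hM1
  have hMge : r ^ β ≤ (M:ℝ) := Nat.le_ceil _
  have hMle : (M:ℝ) ≤ 2 * r ^ β := by
    have h := Nat.ceil_lt_add_one hrβ.le
    rw [← hMdef] at h
    linarith
  set L : ℝ := K * (M:ℝ) ^ (-(p * h')) with hLdef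
  have hL0 : 0 < L := mul_pos (by linarith) (rpow_pos_of_pos hMpos _)
  set c : ℝ := r ^ θ with hcdef
  have hc0 : 0 < c := rpow_pos_of_pos hr0 θ
  set n : ℕ := ⌈2 * L / c⌉₊ with hndef
  have hn1 : 0 < n := Nat.ceil_pos.mpr (by positivity)
  have hnle : (n:ℝ) ≤ 2 * L / c + 1 := by
    have h := Nat.ceil_lt_add_one (le_of_lt (by positivity : (0:ℝ) < 2 * L / c))
    rw [← hndef] at h
    linarith
  have hnc : 2 * L ≤ (n:ℝ) * c := by
    have h := Nat.le_ceil (2 * L / c)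
    rw [← hndef, div_le_iff₀ hc0] at h
    linarith
  have hrc : r ≤ c := by
    have h := Real.rpow_le_rpow_of_exponent_ge hr0 hr1.le hθ1
    rw [Real.rpow_one] at h
    exact h
  -- the two families of intervals
  set U1 : Fin M → Set ℝ := fun k =>
    Icc (f (1 / ((k : ℝ) + 1) ^ p) - r / 2) (f (1 / ((k : ℝ) + 1) ^ p) + r / 2) with hU1def
  set U2 : Fin n → Set ℝ := fun j => Icc (-L + (j : ℝ) * c) (-L + ((j : ℝ) + 1) * c) with hU2def
  clear_value E β M L c n U1 U2
  -- membership in tail intervals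
  have hmem2 : ∀ t : ℝ, |t| ≤ L → ∃ j : Fin n, t ∈ U2 j := by
    intro t ht
    obtain ⟨ht1, ht2⟩ := abs_le.mp ht
    obtain ⟨j, hj1, hj2⟩ := abut_cover hc0 hn1 (a := -L) (t := t) (by linarith) (by linarith)
    refine ⟨j, ?_⟩
    rw [hU2def]
    exact ⟨hj1, hj2⟩
  -- small x means |f x| ≤ L
  have hsmall : ∀ x : ℝ, x ∈ Set.Icc (0:ℝ) 1 → x ≤ (M:ℝ) ^ (-p) → |f x| ≤ L := by
    intro x hx hxM
    have h1 : |f x| ≤ K * x ^ h' := hf x hx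
    have h2 : x ^ h' ≤ ((M:ℝ) ^ (-p)) ^ h' :=
      Real.rpow_le_rpow hx.1 hxM hh'.le
    have h3 : ((M:ℝ) ^ (-p)) ^ h' = (M:ℝ) ^ (-(p * h')) := by
      rw [← Real.rpow_mul hMpos.le, neg_mul]
    calc |f x| ≤ K * x ^ h' := h1
      _ ≤ K * ((M:ℝ) ^ (-p)) ^ h' := by
          exact mul_le_mul_of_nonneg_left h2 (by linarith)
      _ = L := by rw [h3, hLdef]
  refine ⟨M + n, Fin.append U1 U2, ?_, ?_, ?_, ?_⟩
  · -- all sets are intervals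
    intro i
    refine Fin.addCases (fun k => ?_) (fun j => ?_) i
    · exact ⟨_, _, by rw [Fin.append_left, hU1def]⟩
    · exact ⟨_, _, by rw [Fin.append_right, hU2def]⟩
  · -- cover
    rintro y ⟨x, hx, rfl⟩
    rcases hx with hx0 | ⟨k, hk1, hkx⟩
    · -- x = 0
      have hx0 : x = 0 := hx0
      subst hx0
      have hL' : |f 0| ≤ L := by
        have h := hf 0 ⟨le_refl _, zero_le_one⟩
        rw [Real.zero_rpow hh'.ne', mul_zero] at h
        exact le_trans h hL0.le
      obtain ⟨j, hj⟩ := hmem2 _ hL'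
      exact Set.mem_iUnion.mpr ⟨Fin.natAdd M j, by rw [Fin.append_right]; exact hj⟩
    · by_cases hkM : k ≤ M
      · -- covered by the point interval number k-1
        have hklt : k - 1 < M := by omega
        refine Set.mem_iUnion.mpr ⟨Fin.castAdd n ⟨k - 1, hklt⟩, ?_⟩
        rw [Fin.append_left]
        have hcast : ((⟨k - 1, hklt⟩ : Fin M) : ℝ) + 1 = (k : ℝ) := by
          have : ((⟨k - 1, hklt⟩ : Fin M) : ℕ) = k - 1 := rfl
          rw [this, Nat.cast_sub hk1]
          ring
        rw [hU1def]
        simp only [hcast]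
        rw [← hkx]
        constructor <;> simp <;> linarith
      · -- tail: k > M
        push_neg at hkM
        have hk0 : (0:ℝ) < (k:ℝ) := by exact_mod_cast Nat.lt_of_lt_of_le Nat.zero_lt_one hk1
        have hkp : (0:ℝ) < (k:ℝ) ^ p := Real.rpow_pos_of_pos hk0 p
        have hxpos : 0 ≤ x := by rw [hkx]; positivity
        have hx1 : x ≤ 1 := by
          rw [hkx]
          rw [div_le_one hkp]
          exact Real.one_le_rpow (by exact_mod_cast hk1) hp.le
        have hxM : x ≤ (M:ℝ) ^ (-p) := by
          rw [hkx, Real.rpow_neg hMpos.le, div_le_iff₀ hkp, inv_mul_eq_div, le_div_iff₀ (Real.rpow_pos_of_pos hMpos p), one_mul]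
          exact Real.rpow_le_rpow hMpos.le (by exact_mod_cast hkM.le) hp.le
        obtain ⟨j, hj⟩ := hmem2 _ (hsmall x ⟨hxpos, hx1⟩ hxM)
        exact Set.mem_iUnion.mpr ⟨Fin.natAdd M j, by rw [Fin.append_right]; exact hj⟩
  · -- diameter bounds
    intro i
    refine Fin.addCases (fun k => ?_) (fun j => ?_) i
    · rw [Fin.append_left, hU1def]
      have hd : Metric.diam (Icc (f (1 / ((k : ℝ) + 1) ^ p) - r / 2)
          (f (1 / ((k : ℝ) + 1) ^ p) + r / 2)) = r := by
        rw [Real.diam_Icc (by linarith)]; ring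
      rw [hd]
      exact ⟨le_refl _, hrc⟩
    · rw [Fin.append_right, hU2def]
      have hd : Metric.diam (Icc (-L + (j : ℝ) * c) (-L + ((j : ℝ) + 1) * c)) = c := by
        rw [Real.diam_Icc (by nlinarith)]; ring
      rw [hd]
      exact ⟨hrc, le_refl _⟩
  · -- sum bound
    rw [Fin.sum_univ_add]
    have d1 : ∀ k : Fin M, Metric.diam (Fin.append U1 U2 (Fin.castAdd n k)) ^ s = r ^ s := by
      intro k
      rw [Fin.append_left, hU1def]
      congr 1
      rw [Real.diam_Icc (by linarith)]; ring
    have d2 : ∀ j : Fin n, Metric.diam (Fin.append U1 U2 (Fin.natAdd M j)) ^ s = c ^ s := by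
      intro j
      rw [Fin.append_right, hU2def]
      congr 1
      rw [Real.diam_Icc (by nlinarith)]; ring
    rw [Finset.sum_congr rfl (fun k _ => d1 k), Finset.sum_congr rfl (fun j _ => d2 j),
      Finset.sum_const, Finset.sum_const, Finset.card_univ, Finset.card_univ,
      Fintype.card_fin, Fintype.card_fin, nsmul_eq_mul, nsmul_eq_mul]
    have hcs : c ^ s = r ^ (s * θ) := by
      rw [hcdef, ← Real.rpow_mul hr0.le, mul_comm]
    have hrE : (0:ℝ) < r ^ E := rpow_pos_of_pos hr0 E
    have key1 : (M:ℝ) * r ^ s ≤ 2 * r ^ E := by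
      have h1 : (M:ℝ) * r ^ s ≤ 2 * r ^ β * r ^ s :=
        mul_le_mul_of_nonneg_right hMle (rpow_pos_of_pos hr0 s).le
      have h2 : 2 * r ^ β * r ^ s = 2 * r ^ (β + s) := by
        rw [mul_assoc, ← Real.rpow_add hr0]
      have h3 : β + s = E := by
        rw [hβdef, hEdef]; field_simp; ring
      rw [h2, h3] at h1
      exact h1
    have key2 : (n:ℝ) * c ^ s ≤ 2 * K * r ^ E + c ^ s := by
      have hcs0 : (0:ℝ) < c ^ s := rpow_pos_of_pos hc0 s
      have h1 : (n:ℝ) * c ^ s ≤ (2 * L / c + 1) * c ^ s :=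
        mul_le_mul_of_nonneg_right hnle hcs0.le
      have hML : (M:ℝ) ^ (-(p * h')) ≤ r ^ (β * (-(p * h'))) := by
        have h := Real.rpow_le_rpow_of_nonpos hrβ hMge (neg_nonpos.mpr hph.le)
        rwa [← Real.rpow_mul hr0.le] at h
      have h2 : 2 * L / c * c ^ s ≤ 2 * K * r ^ E := by
        have hLle : L ≤ K * r ^ (β * (-(p * h'))) := by
          rw [hLdef]
          exact mul_le_mul_of_nonneg_left hML (by linarith)
        have hdiv : c ^ s / c = r ^ (s * θ - θ) := by
          rw [hcdef, ← Real.rpow_mul hr0.le, mul_comm θ s, ← Real.rpow_sub hr0]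
        have hcomb : r ^ (β * (-(p * h'))) * r ^ (s * θ - θ) = r ^ E := by
          rw [← Real.rpow_add hr0]
          congr 1
          rw [hβdef, hEdef]; field_simp; ring
        calc 2 * L / c * c ^ s = 2 * L * (c ^ s / c) := by ring
          _ ≤ 2 * (K * r ^ (β * (-(p * h')))) * (c ^ s / c) := by
              have : 0 ≤ c ^ s / c := by positivity
              nlinarith
          _ = 2 * K * (r ^ (β * (-(p * h'))) * r ^ (s * θ - θ)) := by rw [hdiv]; ring
          _ = 2 * K * r ^ E := by rw [hcomb]
      calc (n:ℝ) * c ^ s ≤ (2 * L / c + 1) * c ^ s := h1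
        _ = 2 * L / c * c ^ s + c ^ s := by ring
        _ ≤ 2 * K * r ^ E + c ^ s := by linarith [h2]
    calc (M:ℝ) * r ^ s + (n:ℝ) * c ^ s
        ≤ 2 * r ^ E + (2 * K * r ^ E + c ^ s) := by linarith [key1, key2]
      _ = 2 * (1 + K) * r ^ E + c ^ s := by ring
      _ = 2 * (1 + K) * r ^ E + r ^ (s * θ) := by rw [hcs]
end

section
/- Let p > 0, h' > 0, θ ∈ (0,1]. If f : [0,1] → ℝ satisfies |f(x)| ≤ K x^{h'} on [0,1] for some K, then the θ-intermediate upper dimension of f(F_p) is at most θ/(ph' + θ); i.e., for every s > θ/(ph'+θ) and every ε > 0 there is r_0 > 0 such that for all 0 < r ≤ r_0 there is a cover {U_i} of f(F_p) with r ≤ |U_i| ≤ r^θ and Σ|U_i|^s ≤ ε. -/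
open Real Set Metric

set_option maxHeartbeats 1000000 in

theorem upper_intermediate_dim_bound (p h' θ K : ℝ) (hp : 0 < p) (hh' : 0 < h')
    (hθ0 : 0 < θ) (hθ1 : θ ≤ 1)
    (f : ℝ → ℝ) (hf : ∀ x ∈ Set.Icc (0 : ℝ) 1, |f x| ≤ K * x ^ h') :
    ∀ s : ℝ, θ / (p * h' + θ) < s → ∀ ε : ℝ, 0 < ε →
      ∃ r₀ > 0, ∀ r : ℝ, 0 < r → r ≤ r₀ →
        ∃ (N : ℕ) (U : Fin N → Set ℝ),
          f '' ({0} ∪ {x : ℝ | ∃ k : ℕ, 1 ≤ k ∧ x = 1 / (k : ℝ) ^ p}) ⊆ ⋃ i, U i ∧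
          (∀ i, r ≤ Metric.diam (U i) ∧ Metric.diam (U i) ≤ r ^ θ) ∧
          ∑ i, Metric.diam (U i) ^ s ≤ ε := by
  intro s hs ε hε
  have hK : 0 ≤ K := by
    have h1 := hf 1 (by constructor <;> norm_num)
    have h2 := abs_nonneg (f 1)
    rw [Real.one_rpow, mul_one] at h1; linarith
  have hden : (0:ℝ) < p * h' + 1 := by positivity
  have hs0 : 0 < s := lt_trans (by positivity) hs
  set q : ℝ := (s * (1 - θ) + θ) / (p * h' + 1) with hqdef
  set e : ℝ := s - q with hedef
  have hq0 : 0 < q := by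
    apply div_pos _ hden
    nlinarith
  have he0 : 0 < e := by
    have h1 : θ < s * (p * h' + θ) := (div_lt_iff₀ (by positivity)).mp hs
    have h2 : q < s := by
      rw [hqdef, div_lt_iff₀ hden]; nlinarith
    rw [hedef]; linarith
  have hkey : q * (p * h') + θ * (s - 1) = e := by
    rw [hedef, hqdef]; field_simp; ring
  set c : ℝ := min e (min s (θ * s)) with hcdef
  have hc0 : 0 < c := lt_min he0 (lt_min hs0 (by positivity))
  set Y : ℝ := ε / (3 + 2 * K) with hYdef
  have hY0 : 0 < Y := by positivity
  refine ⟨min 1 (Y ^ (1 / c)), lt_min one_pos (Real.rpow_pos_of_pos hY0 _), ?_⟩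
  intro r hr0 hrr
  have hr1 : r ≤ 1 := le_trans hrr (min_le_left _ _)
  have hrc : r ^ c ≤ Y := by
    calc r ^ c ≤ (Y ^ (1/c)) ^ c :=
          Real.rpow_le_rpow hr0.le (le_trans hrr (min_le_right _ _)) hc0.le
      _ = Y := by
          rw [← Real.rpow_mul hY0.le, one_div_mul_cancel hc0.ne', Real.rpow_one]
  have hflip : ∀ x y cc : ℝ, 0 < x → x ≤ y → 0 ≤ cc → y ^ (-cc) ≤ x ^ (-cc) := by
    intro x y cc hx hxy hcc
    rw [Real.rpow_neg hx.le, Real.rpow_neg (hx.trans_le hxy).le]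
    exact inv_anti₀ (Real.rpow_pos_of_pos hx _) (Real.rpow_le_rpow hx.le hxy hcc)
  set m : ℕ := ⌈r ^ (-q)⌉₊ with hmdef
  have hrq0 : 0 < r ^ (-q) := Real.rpow_pos_of_pos hr0 _
  have hm1 : 1 ≤ m := Nat.one_le_ceil_iff.mpr hrq0
  have hmr : r ^ (-q) ≤ (m:ℝ) := Nat.le_ceil _
  have hm0 : (0:ℝ) < (m:ℝ) := lt_of_lt_of_le hrq0 hmr
  set L : ℝ := r ^ θ with hLdef
  have hL0 : 0 < L := Real.rpow_pos_of_pos hr0 _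
  have hrL : r ≤ L := by
    nth_rewrite 1 [← Real.rpow_one r]
    exact Real.rpow_le_rpow_of_exponent_ge hr0 hr1 hθ1
  set B : ℝ := K * (m:ℝ) ^ (-(p * h')) with hBdef
  have hB0 : 0 ≤ B := mul_nonneg hK (Real.rpow_pos_of_pos hm0 _).le
  set T : ℕ := ⌊2 * B / L⌋₊ + 1 with hTdef
  set g : ℕ → ℝ := fun k => f (1 / (k:ℝ) ^ p) with hgdef
  have hg : ∀ k : ℕ, 1 ≤ k → |g k| ≤ K * (k:ℝ) ^ (-(p * h')) := by
    intro k hk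
    have hk1 : (1:ℝ) ≤ (k:ℝ) := by exact_mod_cast hk
    have hk0 : (0:ℝ) ≤ (k:ℝ) := by linarith
    have hkp : (1:ℝ) ≤ (k:ℝ) ^ p := Real.one_le_rpow hk1 hp.le
    have hkpp : (0:ℝ) < (k:ℝ) ^ p := by linarith
    have hx : 1 / (k:ℝ) ^ p ∈ Set.Icc (0:ℝ) 1 := by
      constructor
      · positivity
      · rw [div_le_one hkpp]; exact hkp
    have h1 := hf _ hx
    have heq : (1 / (k:ℝ) ^ p) ^ h' = (k:ℝ) ^ (-(p * h')) := by
      rw [one_div, ← Real.rpow_neg hk0, ← Real.rpow_mul hk0, neg_mul]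
    rw [heq] at h1
    exact h1
  set U1 : Fin m → Set ℝ := fun i => Set.Icc (g ((i:ℕ) + 1) - r/2) (g ((i:ℕ) + 1) + r/2) with hU1
  set U2 : Fin T → Set ℝ := fun j => Set.Icc (-B + (j:ℝ) * L) (-B + ((j:ℝ) + 1) * L) with hU2
  have htail : ∀ y : ℝ, |y| ≤ B → ∃ j : Fin T, y ∈ U2 j := by
    intro y hy
    obtain ⟨hy1, hy2⟩ := abs_le.mp hy
    have hnn : 0 ≤ (y + B) / L := div_nonneg (by linarith) hL0.le
    have hle : (y + B) / L ≤ 2 * B / L := by gcongr; linarith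
    refine ⟨⟨⌊(y + B) / L⌋₊, ?_⟩, ?_, ?_⟩
    · rw [hTdef]
      exact Nat.lt_succ_of_le (Nat.floor_le_floor hle)
    · have h1 : (⌊(y + B) / L⌋₊ : ℝ) ≤ (y + B) / L := Nat.floor_le hnn
      have h2 : (⌊(y + B) / L⌋₊ : ℝ) * L ≤ y + B := by
        rw [← le_div_iff₀ hL0]; exact h1
      simp only [Fin.val_mk]
      linarith
    · have h1 : (y + B) / L < (⌊(y + B) / L⌋₊ : ℝ) + 1 := Nat.lt_floor_add_one _
      have h2 : y + B < ((⌊(y + B) / L⌋₊ : ℝ) + 1) * L := by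
        rw [← div_lt_iff₀ hL0]; exact h1
      simp only [Fin.val_mk]
      linarith
  refine ⟨m + T, Fin.addCases U1 U2, ?_, ?_, ?_⟩
  · rintro y ⟨x, hx, rfl⟩
    rcases hx with rfl | ⟨k, hk1, rfl⟩
    · have hf0 : f 0 = 0 := by
        have h1 := hf 0 (by constructor <;> norm_num)
        rw [Real.zero_rpow hh'.ne', mul_zero] at h1
        have h2 := abs_nonneg (f 0)
        exact abs_eq_zero.mp (le_antisymm h1 h2)
      obtain ⟨j, hj⟩ := htail (f 0) (by rw [hf0]; simpa using hB0)
      exact Set.mem_iUnion.mpr ⟨Fin.natAdd m j, by simp only [Fin.addCases_right]; exact hj⟩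
    · by_cases hkm : k ≤ m
      · refine Set.mem_iUnion.mpr ⟨Fin.castAdd T ⟨k - 1, by omega⟩, ?_⟩
        simp only [Fin.addCases_left]
        show f (1 / (k:ℝ) ^ p) ∈ U1 ⟨k - 1, by omega⟩
        simp only [hU1]
        rw [show k - 1 + 1 = k from by omega]
        show f (1 / (k:ℝ) ^ p) ∈ Set.Icc (g k - r/2) (g k + r/2)
        have : g k = f (1 / (k:ℝ) ^ p) := rfl
        rw [this]
        constructor <;> linarith
      · have hbd : |g k| ≤ B := by
          refine le_trans (hg k hk1) ?_
          rw [hBdef]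
          have h1 := hflip (m:ℝ) (k:ℝ) (p * h') hm0
            (by exact_mod_cast (by omega : m ≤ k)) (by positivity)
          exact mul_le_mul_of_nonneg_left h1 hK
        obtain ⟨j, hj⟩ := htail (g k) hbd
        exact Set.mem_iUnion.mpr ⟨Fin.natAdd m j, by simp only [Fin.addCases_right]; exact hj⟩
  · intro i
    induction i using Fin.addCases with
    | left i =>
        simp only [Fin.addCases_left]
        have hd : Metric.diam (U1 i) = r := by
          simp only [hU1]
          rw [Real.diam_Icc (by linarith)]
          ring
        rw [hd]; exact ⟨le_refl r, hrL⟩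
    | right j =>
        simp only [Fin.addCases_right]
        have hd : Metric.diam (U2 j) = L := by
          simp only [hU2]
          rw [Real.diam_Icc (by nlinarith)]
          ring
        rw [hd]; exact ⟨hrL, le_refl L⟩
  · rw [Fin.sum_univ_add]
    have h1 : ∀ i : Fin m, Metric.diam (Fin.addCases (n := T) U1 U2 (Fin.castAdd T i)) ^ s = r ^ s := by
      intro i; simp only [Fin.addCases_left]; congr 1
      simp only [hU1]
      rw [Real.diam_Icc (by linarith)]; ring
    have h2 : ∀ j : Fin T, Metric.diam (Fin.addCases (m := m) U1 U2 (Fin.natAdd m j)) ^ s = L ^ s := by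
      intro j; simp only [Fin.addCases_right]; congr 1
      simp only [hU2]
      rw [Real.diam_Icc (by nlinarith)]; ring
    rw [Finset.sum_congr rfl fun i _ => h1 i, Finset.sum_congr rfl fun j _ => h2 j,
        Finset.sum_const, Finset.sum_const]
    simp only [Finset.card_univ, Fintype.card_fin, nsmul_eq_mul]
    have hrs : (0:ℝ) < r ^ s := Real.rpow_pos_of_pos hr0 _
    have hLs : (0:ℝ) < L ^ s := Real.rpow_pos_of_pos hL0 _
    have hm_le : (m:ℝ) ≤ r ^ (-q) + 1 := le_of_lt (Nat.ceil_lt_add_one hrq0.le)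
    have hT_le : (T:ℝ) ≤ 2 * B / L + 1 := by
      rw [hTdef]; push_cast
      have := Nat.floor_le (show (0:ℝ) ≤ 2 * B / L from div_nonneg (by linarith) hL0.le)
      linarith
    have step1 : (m:ℝ) * r ^ s ≤ r ^ e + r ^ s := by
      have h3 : (m:ℝ) * r ^ s ≤ (r ^ (-q) + 1) * r ^ s :=
        mul_le_mul_of_nonneg_right hm_le hrs.le
      have h4 : (r ^ (-q) + 1) * r ^ s = r ^ e + r ^ s := by
        rw [add_mul, one_mul, ← Real.rpow_add hr0, show -q + s = e from by rw [hedef]; ring]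
      linarith
    have hLs_eq : L ^ s = r ^ (θ * s) := by rw [hLdef, ← Real.rpow_mul hr0.le]
    have hLs1 : L ^ (s - 1) = r ^ (θ * (s - 1)) := by rw [hLdef, ← Real.rpow_mul hr0.le]
    have step2 : (T:ℝ) * L ^ s ≤ 2 * K * r ^ e + r ^ (θ * s) := by
      have h2BL : 2 * B / L * L ^ s = 2 * B * L ^ (s - 1) := by
        rw [show s = (s - 1) + 1 from by ring, Real.rpow_add_one hL0.ne']
        field_simp; ring
      have hBle : B ≤ K * r ^ (q * (p * h')) := by
        have ha := hflip (r ^ (-q)) (m:ℝ) (p * h') hrq0 hmr (by positivity)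
        have hb : (r ^ (-q)) ^ (-(p * h')) = r ^ (q * (p * h')) := by
          rw [← Real.rpow_mul hr0.le]; ring_nf
        rw [hBdef]
        calc K * (m:ℝ) ^ (-(p * h')) ≤ K * (r ^ (-q)) ^ (-(p * h')) :=
              mul_le_mul_of_nonneg_left ha hK
          _ = K * r ^ (q * (p * h')) := by rw [hb]
      have hfin : 2 * B * L ^ (s - 1) ≤ 2 * K * r ^ e := by
        rw [hLs1]
        calc 2 * B * r ^ (θ * (s - 1))
            ≤ 2 * (K * r ^ (q * (p * h'))) * r ^ (θ * (s - 1)) := by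
              have hXnn := Real.rpow_nonneg hr0.le (θ * (s - 1))
              exact mul_le_mul_of_nonneg_right (by linarith) hXnn
          _ = 2 * K * r ^ e := by
              rw [show (2:ℝ) * (K * r ^ (q * (p * h'))) * r ^ (θ * (s - 1))
                    = 2 * K * (r ^ (q * (p * h')) * r ^ (θ * (s - 1))) from by ring,
                  ← Real.rpow_add hr0, hkey]
      calc (T:ℝ) * L ^ s ≤ (2 * B / L + 1) * L ^ s :=
            mul_le_mul_of_nonneg_right hT_le hLs.le
        _ = 2 * B * L ^ (s - 1) + L ^ s := by rw [add_mul, one_mul, h2BL]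
        _ ≤ 2 * K * r ^ e + r ^ (θ * s) := by rw [hLs_eq]; linarith
    have hre : r ^ e ≤ r ^ c :=
      Real.rpow_le_rpow_of_exponent_ge hr0 hr1 (min_le_left _ _)
    have hrs' : r ^ s ≤ r ^ c :=
      Real.rpow_le_rpow_of_exponent_ge hr0 hr1 (le_trans (min_le_right _ _) (min_le_left _ _))
    have hrθs : r ^ (θ * s) ≤ r ^ c :=
      Real.rpow_le_rpow_of_exponent_ge hr0 hr1 (le_trans (min_le_right _ _) (min_le_right _ _))
    have h2K : 2 * K * r ^ e ≤ 2 * K * r ^ c := mul_le_mul_of_nonneg_left hre (by linarith)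
    have hfinal : (3 + 2 * K) * r ^ c ≤ (3 + 2 * K) * Y :=
      mul_le_mul_of_nonneg_left hrc (by linarith)
    have hYe : (3 + 2 * K) * Y = ε := by
      rw [hYdef]
      field_simp
    have hexp : (3 + 2 * K) * r ^ c = 3 * r ^ c + 2 * K * r ^ c := by ring
    calc (m:ℝ) * r ^ s + (T:ℝ) * L ^ s
        ≤ (r ^ e + r ^ s) + (2 * K * r ^ e + r ^ (θ * s)) := by linarith
      _ ≤ (3 + 2 * K) * r ^ c := by rw [hexp]; linarith
      _ ≤ (3 + 2 * K) * Y := hfinal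
      _ = ε := hYe
end
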